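/- arXiv:math/0508108 — 9 statements merged into one kernel-verified Lean document; each statement's English description precedes it below -/
import Mathlib

section
/- Let L be a lattice and σ a reflection on L. Then the subgroups ker(1+σ) and im(1−σ) of L (the kernel of the endomorphism x ↦ x + σ(x) and the image of the endomorphism x ↦ x − σ(x)) are both infinite cyclic, and there are inclusions 2·ker(1+σ) ⊆ im(1−σ) ⊆ ker(1+σ). Moreover, 2·ker(1+σ) = im(1−σ) if and only if σ is trivial mod 2. -/
open Submodule Module

lemma span_of_fr_one {L : Type*} [AddCommGroup L] [Module.Free ℤ L]
    [Module.Finite ℤ L] (N : Submodule ℤ L) (h : Module.finrank ℤ N = 1) :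
    ∃ c : L, c ≠ 0 ∧ N = Submodule.span ℤ {c} := by
  have inst1 : IsNoetherian ℤ L := isNoetherian_of_isNoetherianRing_of_finite ℤ L
  haveI : Module.Finite ℤ N := Module.Finite.iff_fg.2 (IsNoetherian.noetherian N)
  haveI : Module.Free ℤ N := inferInstance
  let b : Basis (Fin 1) ℤ N := Module.finBasisOfFinrankEq ℤ N h
  refine ⟨(b 0 : L), ?_, ?_⟩
  · exact fun hc => b.ne_zero 0 (Subtype.coe_injective (by simpa using hc))
  · have h2 : Submodule.map N.subtype (span ℤ (Set.range b)) = span ℤ {(b 0 : L)} := by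
      rw [Submodule.map_span]
      congr 1
      ext x
      simp only [Set.mem_image, Set.mem_range, Set.mem_singleton_iff]
      constructor
      · rintro ⟨y, ⟨i, rfl⟩, rfl⟩
        rw [Fin.eq_zero i]; rfl
      · rintro rfl; exact ⟨b 0, ⟨0, rfl⟩, rfl⟩
    rw [b.span_eq, Submodule.map_subtype_top] at h2
    exact h2

/-- For a reflection `σ` on a lattice `L`, the subgroups `ker(1+σ)` and
`im(1−σ)` are infinite cyclic, `2·ker(1+σ) ⊆ im(1−σ) ⊆ ker(1+σ)`, and
`2·ker(1+σ) = im(1−σ)` iff `σ` is trivial mod 2. -/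
theorem stmt0 (L : Type*) [AddCommGroup L] [Module.Free ℤ L] [Module.Finite ℤ L]
    (σ : L →ₗ[ℤ] L) (hinv : σ ∘ₗ σ = LinearMap.id)
    (hrank : Module.finrank ℤ (LinearMap.ker (LinearMap.id + σ)) = 1) :
    (∃ b : L, b ≠ 0 ∧ LinearMap.ker (LinearMap.id + σ) = Submodule.span ℤ {b}) ∧
    (∃ c : L, c ≠ 0 ∧ LinearMap.range (LinearMap.id - σ) = Submodule.span ℤ {c}) ∧
    Submodule.map ((2 : ℤ) • (LinearMap.id : L →ₗ[ℤ] L)) (LinearMap.ker (LinearMap.id + σ)) ≤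
      LinearMap.range (LinearMap.id - σ) ∧
    LinearMap.range (LinearMap.id - σ) ≤ LinearMap.ker (LinearMap.id + σ) ∧
    (Submodule.map ((2 : ℤ) • (LinearMap.id : L →ₗ[ℤ] L)) (LinearMap.ker (LinearMap.id + σ)) =
        LinearMap.range (LinearMap.id - σ) ↔
      ∀ x : L, ∃ y : L, σ x - x = (2 : ℤ) • y) := by
  have inst1 : IsNoetherian ℤ L := isNoetherian_of_isNoetherianRing_of_finite ℤ L
  haveI : NoZeroSMulDivisors ℤ L := ⟨fun h => Module.isTorsionFree_iff_smul_eq_zero.1 inferInstance _ _ h⟩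
  set K := LinearMap.ker (LinearMap.id + σ) with hK
  set I := LinearMap.range (LinearMap.id - σ) with hI
  set f := ((2 : ℤ) • (LinearMap.id : L →ₗ[ℤ] L)) with hf
  have hσσ : ∀ x : L, σ (σ x) = x := fun x => congrArg (· x) hinv
  have hfx : ∀ x : L, f x = (2 : ℤ) • x := fun x => rfl
  have hmemK : ∀ x : L, x ∈ K ↔ x + σ x = 0 := fun x => Iff.rfl
  have hIK : I ≤ K := by
    rintro _ ⟨x, rfl⟩
    show ((LinearMap.id : L →ₗ[ℤ] L) - σ) x + σ (((LinearMap.id : L →ₗ[ℤ] L) - σ) x) = 0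
    simp [hσσ]
  have h2K : Submodule.map f K ≤ I := by
    rintro _ ⟨x, hx, rfl⟩
    have hx' : σ x = -x := by
      have := (hmemK x).1 hx
      linear_combination (norm := module) this
    exact ⟨x, by simp [hfx, hx', two_smul]⟩
  have hfinj : Function.Injective f := by
    intro x y hxy
    exact smul_right_injective L (by norm_num : (2:ℤ) ≠ 0) hxy
  haveI : Module.Finite ℤ K := Module.Finite.iff_fg.2 (IsNoetherian.noetherian K)
  haveI : Module.Finite ℤ I := Module.Finite.iff_fg.2 (IsNoetherian.noetherian I)
  haveI : Module.Finite ℤ (Submodule.map f K) :=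
    Module.Finite.iff_fg.2 (IsNoetherian.noetherian _)
  have hr2K : Module.finrank ℤ (Submodule.map f K) = 1 := by
    rw [← (Submodule.equivMapOfInjective f hfinj K).finrank_eq]
    exact hrank
  have hrI : Module.finrank ℤ I = 1 :=
    le_antisymm (hrank ▸ Submodule.finrank_mono hIK)
      (hr2K ▸ Submodule.finrank_mono h2K)
  refine ⟨span_of_fr_one K hrank, span_of_fr_one I hrI, h2K, hIK, ?_, ?_⟩
  · intro h x
    have hx : ((LinearMap.id : L →ₗ[ℤ] L) - σ) x ∈ Submodule.map f K := by
      rw [h]; exact ⟨x, rfl⟩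
    obtain ⟨k, _, hk2⟩ := hx
    refine ⟨-k, ?_⟩
    have h4 : (2:ℤ) • k = x - σ x := hk2
    rw [smul_neg, h4]
    abel
  · intro h
    refine le_antisymm h2K ?_
    rintro _ ⟨x, rfl⟩
    obtain ⟨y, hy⟩ := h x
    have hval : ((LinearMap.id : L →ₗ[ℤ] L) - σ) x = f (-y) := by
      show x - σ x = (2:ℤ) • (-y)
      linear_combination (norm := module) -hy
    have hyK : -y ∈ K := by
      rw [hmemK]
      have h2 : (2:ℤ) • (-y + σ (-y)) = 0 := by
        have h3 : ((LinearMap.id : L →ₗ[ℤ] L) + σ) (((LinearMap.id : L →ₗ[ℤ] L) - σ) x) = 0 :=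
          hIK ⟨x, rfl⟩
        rw [hval] at h3
        have h5 : f (-y) + σ (f (-y)) = 0 := h3
        rw [hfx, map_smul] at h5
        rw [smul_add]
        exact h5
      exact (smul_eq_zero_iff_right (by norm_num : (2:ℤ) ≠ 0)).1 h2
    exact ⟨-y, hyK, hval.symm⟩
end

section
/- Let σ be a reflection on a lattice L and let b₀ be a generator of the infinite cyclic group ker(1+σ). If σ is trivial mod 2, then σ has exactly two markings, one containing a strict marking with first component b₀ and the other containing a strict marking with first component 2·b₀. If σ is nontrivial mod 2, then σ has exactly one marking, containing a strict marking with first component b₀. -/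
/-- A strict marking for a reflection `σ` on a lattice `L` is a pair `(b, β)` with
`σ(x) = x + β(x)·b` for all `x`. -/
def IsStrictMarking {L : Type*} [AddCommGroup L] [Module ℤ L]
    (σ : L →ₗ[ℤ] L) (p : L × (L →ₗ[ℤ] ℤ)) : Prop :=
  ∀ x : L, σ x = x + p.2 x • p.1

/-- The equivalence relation on strict markings: `(b, β) ≈ ±(b′, β′)`.  Markings are the
classes of this relation, i.e. elements of `Quot (MarkingRel σ)`. -/
def MarkingRel {L : Type*} [AddCommGroup L] [Module ℤ L] (σ : L →ₗ[ℤ] L)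
    (p q : {p : L × (L →ₗ[ℤ] ℤ) // IsStrictMarking σ p}) : Prop :=
  p.val = q.val ∨ p.val = -q.val

lemma exists_coeff_hom {L : Type*} [AddCommGroup L] [NoZeroSMulDivisors ℤ L]
    (v : L) (hv : v ≠ 0) (f : L →ₗ[ℤ] L) (hf : ∀ x, f x ∈ Submodule.span ℤ {v}) :
    ∃ β : L →ₗ[ℤ] ℤ, ∀ x, β x • v = f x := by
  choose g hg using fun x => Submodule.mem_span_singleton.mp (hf x)
  have hinj : Function.Injective fun c : ℤ => c • v := smul_left_injective ℤ hv
  refine ⟨⟨⟨g, ?_⟩, ?_⟩, hg⟩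
  · intro x y
    apply hinj
    simp only [add_smul, hg, map_add]
  · intro m x
    apply hinj
    simp only [smul_eq_mul, mul_smul, hg, map_smul, RingHom.id_apply]

/-- Let `b₀` generate `ker(1+σ)`.  If `σ` is trivial mod 2, then `σ` has exactly
two markings, represented by strict markings with first components `b₀` and `2·b₀`;
otherwise it has exactly one marking, represented by a strict marking with first
component `b₀`. -/
theorem stmt2 (L : Type*) [AddCommGroup L] [Module.Free ℤ L] [Module.Finite ℤ L]
    (σ : L →ₗ[ℤ] L) (hinv : σ ∘ₗ σ = LinearMap.id)
    (hrank : Module.finrank ℤ (LinearMap.ker (LinearMap.id + σ)) = 1)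
    (b₀ : L) (hgen : LinearMap.ker (LinearMap.id + σ) = Submodule.span ℤ {b₀}) :
    ((∀ x : L, ∃ y : L, σ x - x = (2 : ℤ) • y) →
      ∃ p q : {p : L × (L →ₗ[ℤ] ℤ) // IsStrictMarking σ p},
        p.val.1 = b₀ ∧ q.val.1 = (2 : ℤ) • b₀ ∧
        Quot.mk (MarkingRel σ) p ≠ Quot.mk (MarkingRel σ) q ∧
        ∀ m : Quot (MarkingRel σ),
          m = Quot.mk (MarkingRel σ) p ∨ m = Quot.mk (MarkingRel σ) q) ∧
    ((¬ ∀ x : L, ∃ y : L, σ x - x = (2 : ℤ) • y) →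
      ∃ p : {p : L × (L →ₗ[ℤ] ℤ) // IsStrictMarking σ p},
        p.val.1 = b₀ ∧
        ∀ m : Quot (MarkingRel σ), m = Quot.mk (MarkingRel σ) p) := by
  have : NoZeroSMulDivisors ℤ L :=
    have := Module.isTorsionFree_int_iff_isAddTorsionFree.mp (inferInstance : Module.IsTorsionFree ℤ L); inferInstance
  have hσσ : ∀ x, σ (σ x) = x := fun x => congrFun (congrArg DFunLike.coe hinv) x
  have hb₀ : b₀ ≠ 0 := by
    rintro rfl
    rw [Set.singleton_zero, Submodule.span_zero] at hgen
    rw [hgen] at hrank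
    simp at hrank
  have hinj : Function.Injective fun c : ℤ => c • b₀ := smul_left_injective ℤ hb₀
  have hker : ∀ x : L, ((σ - LinearMap.id : L →ₗ[ℤ] L)) x ∈ Submodule.span ℤ {b₀} := by
    intro x
    rw [← hgen, LinearMap.mem_ker]
    simp only [LinearMap.sub_apply, LinearMap.add_apply, LinearMap.id_apply, map_sub]
    rw [hσσ x]
    abel
  obtain ⟨c, hc⟩ := exists_coeff_hom b₀ hb₀ (σ - LinearMap.id : L →ₗ[ℤ] L) hker
  simp only [LinearMap.sub_apply, LinearMap.id_apply] at hc
  have hσb₀ : σ b₀ = -b₀ := by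
    have : b₀ ∈ LinearMap.ker (LinearMap.id + σ) := by
      rw [hgen]; exact Submodule.mem_span_singleton_self b₀
    rw [LinearMap.mem_ker, LinearMap.add_apply, LinearMap.id_apply] at this
    linear_combination (norm := abel) this
  have hcb₀ : c b₀ = -2 := by
    apply hinj
    simp only [hc, hσb₀]
    abel_nf
  have hpm : IsStrictMarking σ (b₀, c) := by
    intro x
    simp only
    rw [hc]; abel
  set p : {p : L × (L →ₗ[ℤ] ℤ) // IsStrictMarking σ p} := ⟨(b₀, c), hpm⟩ with hp
  have classify : ∀ r : {p : L × (L →ₗ[ℤ] ℤ) // IsStrictMarking σ p},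
      (r.val = (b₀, c) ∨ r.val = -(b₀, c)) ∨
      (∃ β' : L →ₗ[ℤ] ℤ, (∀ x : L, c x = 2 * β' x) ∧
        (r.val = ((2:ℤ) • b₀, β') ∨ r.val = -((2:ℤ) • b₀, β'))) := by
    rintro ⟨⟨b, β⟩, hβ⟩
    simp only [IsStrictMarking] at hβ
    have hne : ∃ x₀, β x₀ • b ≠ 0 := by
      by_contra h
      push_neg at h
      have hid : ∀ x, σ x = x := fun x => by rw [hβ x, h x, add_zero]
      have hbot : LinearMap.ker (LinearMap.id + σ) = ⊥ := by
        ext y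
        simp only [LinearMap.mem_ker, LinearMap.add_apply, LinearMap.id_apply,
          Submodule.mem_bot, hid]
        constructor
        · intro hy
          have : (2:ℤ) • y = 0 := by rw [two_smul]; exact hy
          exact (smul_eq_zero.mp this).resolve_left (by norm_num)
        · rintro rfl; simp
      rw [hbot] at hrank
      simp at hrank
    obtain ⟨x₀, hx₀⟩ := hne
    have hbne : b ≠ 0 := fun h => hx₀ (by rw [h, smul_zero])
    have hβx₀ : β x₀ ≠ 0 := fun h => hx₀ (by rw [h, zero_smul])
    have hβb : β b = -2 := by
      have h1 : σ (σ x₀) = x₀ + (β x₀ * (2 + β b)) • b := by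
        rw [hβ x₀, hβ (x₀ + β x₀ • b)]
        simp only [map_add, map_smul, smul_eq_mul]
        module
      rw [hσσ x₀] at h1
      have h2 : (β x₀ * (2 + β b)) • b = 0 := by
        have := h1.symm
        rwa [add_eq_left] at this
      have h3 : β x₀ * (2 + β b) = 0 := (smul_eq_zero.mp h2).resolve_right hbne
      have h4 : 2 + β b = 0 := (mul_eq_zero.mp h3).resolve_left hβx₀
      linarith
    have hσb : σ b = -b := by
      rw [hβ b, hβb]
      module
    have hbk : ∃ k : ℤ, k • b₀ = b := by
      rw [← Submodule.mem_span_singleton, ← hgen, LinearMap.mem_ker]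
      simp [hσb]
    obtain ⟨k, hk⟩ := hbk
    have hck : ∀ x, c x = β x * k := by
      intro x
      apply hinj
      simp only [hc, hβ x, mul_smul, hk]
      abel
    have hkdvd : k ∣ 2 := by
      refine Dvd.intro (-(β b₀)) ?_
      have := hck b₀
      rw [hcb₀] at this
      linarith [this]
    have hkne : k ≠ 0 := by
      rintro rfl
      norm_num at hkdvd
    have hkub : k ≤ 2 := Int.le_of_dvd two_pos hkdvd
    have hklb : -2 ≤ k := by
      linarith [Int.le_of_dvd two_pos (neg_dvd.mpr hkdvd)]
    interval_cases k
    · -- k = -2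
      right
      refine ⟨-β, fun x => by rw [hck x]; simp; ring, Or.inr ?_⟩
      have h1 : b = -((2:ℤ) • b₀) := by rw [← hk]; module
      have h2 : β = -(-β) := by simp
      simp only [Prod.neg_mk]
      exact Prod.ext h1 (by simp)
    · -- k = -1
      left; right
      have h1 : b = -b₀ := by rw [← hk]; module
      have h2 : β = -c := by
        ext x
        simp only [LinearMap.neg_apply, hck x]
        ring
      simp only [Prod.neg_mk]
      exact Prod.ext h1 h2
    · exact absurd rfl hkne
    · -- k = 1
      left; left
      have h1 : b = b₀ := by rw [← hk]; module
      have h2 : β = c := by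
        ext x
        rw [hck x]; ring
      exact Prod.ext h1 h2
    · -- k = 2
      right
      refine ⟨β, fun x => by rw [hck x]; ring, Or.inl ?_⟩
      exact Prod.ext hk.symm rfl
  constructor
  · -- trivial mod 2 case
    intro htriv
    have h2b₀ : (2:ℤ) • b₀ ≠ 0 := by
      intro h
      exact hb₀ ((smul_eq_zero.mp h).resolve_left (by norm_num))
    have hker2 : ∀ x : L, ((σ - LinearMap.id : L →ₗ[ℤ] L)) x ∈ Submodule.span ℤ {(2:ℤ) • b₀} := by
      intro x
      obtain ⟨y, hy⟩ := htriv x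
      have hy' : y ∈ LinearMap.ker (LinearMap.id + σ) := by
        rw [LinearMap.mem_ker, LinearMap.add_apply, LinearMap.id_apply]
        have h2 : (2:ℤ) • (y + σ y) = 0 := by
          have hss : σ (σ x - x) = -(σ x - x) := by
            rw [map_sub, hσσ x]; abel
          calc (2:ℤ) • (y + σ y) = (σ x - x) + σ (σ x - x) := by
                rw [hy]
                simp only [map_smul]
                module
            _ = 0 := by rw [hss]; abel
        exact (smul_eq_zero.mp h2).resolve_left (by norm_num)
      rw [hgen, Submodule.mem_span_singleton] at hy'
      obtain ⟨m, hm⟩ := hy'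
      rw [Submodule.mem_span_singleton]
      refine ⟨m, ?_⟩
      simp only [LinearMap.sub_apply, LinearMap.id_apply, hy, ← hm]
      module
    obtain ⟨d, hd⟩ := exists_coeff_hom ((2:ℤ) • b₀) h2b₀ (σ - LinearMap.id : L →ₗ[ℤ] L) hker2
    simp only [LinearMap.sub_apply, LinearMap.id_apply] at hd
    have hqm : IsStrictMarking σ ((2:ℤ) • b₀, d) := by
      intro x
      simp only
      rw [hd]; abel
    set q : {p : L × (L →ₗ[ℤ] ℤ) // IsStrictMarking σ p} := ⟨((2:ℤ) • b₀, d), hqm⟩ with hq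
    have hcd : ∀ x, c x = 2 * d x := by
      intro x
      apply hinj
      simp only [hc, ← hd x, mul_smul]
      module
    refine ⟨p, q, rfl, rfl, ?_, ?_⟩
    · intro heq
      have hF : ∀ a b, MarkingRel σ a b →
          (a.val.1 = b₀ ∨ a.val.1 = -b₀) = (b.val.1 = b₀ ∨ b.val.1 = -b₀) := by
        rintro a b (h | h)
        · rw [h]
        · rw [h]
          simp only [Prod.fst_neg, neg_eq_iff_eq_neg, neg_neg]
          exact propext or_comm
      have h2 : (p.val.1 = b₀ ∨ p.val.1 = -b₀) = (q.val.1 = b₀ ∨ q.val.1 = -b₀) :=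
        congrArg (Quot.lift (fun r => (r.val.1 = b₀ ∨ r.val.1 = -b₀)) hF) heq
      have hPp : (p.val.1 = b₀ ∨ p.val.1 = -b₀) := Or.inl rfl
      rw [h2] at hPp
      rcases hPp with h | h
      · have h3 : (2:ℤ) • b₀ = (1:ℤ) • b₀ := by rw [one_smul]; exact h
        have := hinj h3
        norm_num at this
      · have h3 : (2:ℤ) • b₀ = (-1:ℤ) • b₀ := by rw [neg_one_smul]; exact h
        have := hinj h3
        norm_num at this
    · intro m
      obtain ⟨r, rfl⟩ := Quot.exists_rep m
      rcases classify r with (h | h) | ⟨β', hβ', (h | h)⟩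
      · exact Or.inl (Quot.sound (Or.inl h))
      · exact Or.inl (Quot.sound (Or.inr h))
      · refine Or.inr (Quot.sound (Or.inl ?_))
        have hβd : β' = d := by
          ext x
          have h1 := hcd x
          have h2 := hβ' x
          omega
        rw [h, hβd]
      · refine Or.inr (Quot.sound (Or.inr ?_))
        have hβd : β' = d := by
          ext x
          have h1 := hcd x
          have h2 := hβ' x
          omega
        rw [h, hβd]
  · intro hnt
    refine ⟨p, rfl, ?_⟩
    intro m
    obtain ⟨r, rfl⟩ := Quot.exists_rep m
    rcases classify r with (h | h) | ⟨β', hβ', _⟩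
    · exact Quot.sound (Or.inl h)
    · exact Quot.sound (Or.inr h)
    · exfalso
      apply hnt
      intro x
      refine ⟨β' x • b₀, ?_⟩
      rw [← hc x, hβ' x]
      module
end

section
/- Let L be a lattice, σ a reflection on L, and T = (ℝ ⊗ L)/L the quotient of the real vector space ℝ ⊗ L by the image of L, with the action on T induced by σ. Let T₀⁻(σ) ⊆ T denote the image in T of the subspace ℝ ⊗ ker(1+σ). Then the map sending a strict marking (b, β) of σ to the class of (1/2)·b in T induces a well-defined bijection from the set of markings of σ to the set of elements h ∈ T such that (i) h ∈ T₀⁻(σ), (ii) 2h = 0, and (iii) h ≠ 0 if σ is nontrivial mod 2. -/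
open scoped TensorProduct

/-- The natural map `L → ℝ ⊗ L`. -/
noncomputable def latticeToReal (L : Type*) [AddCommGroup L] : L →ₗ[ℤ] ℝ ⊗[ℤ] L :=
  TensorProduct.mk ℤ ℝ L 1

/-- The torus `T = (ℝ ⊗ L)/L`. -/
abbrev RealTorus (L : Type*) [AddCommGroup L] :=
  (ℝ ⊗[ℤ] L) ⧸ (LinearMap.range (latticeToReal L)).toAddSubgroup

/-- The quotient map `ℝ ⊗ L → T`. -/
noncomputable def torusMk (L : Type*) [AddCommGroup L] : (ℝ ⊗[ℤ] L) →+ RealTorus L :=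
  QuotientAddGroup.mk' _

/-- The class of `(1/2)·b` in the torus `T = (ℝ ⊗ L)/L`, for a strict marking `(b, β)`. -/
noncomputable def markingImage {L : Type*} [AddCommGroup L] (p : L × (L →ₗ[ℤ] ℤ)) :
    RealTorus L :=
  torusMk L ((2⁻¹ : ℝ) • latticeToReal L p.1)

/-- The set of elements `h ∈ T` which are markings of `σ` in the torus sense:
`h` lies in the image `T₀⁻(σ)` of `ℝ ⊗ ker(1+σ)`, `2h = 0`, and `h ≠ 0` if `σ` is
nontrivial mod 2. -/
def TorusMarkings {L : Type*} [AddCommGroup L] (σ : L →ₗ[ℤ] L) : Set (RealTorus L) :=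
  {h : RealTorus L |
    h ∈ ⇑(torusMk L) ''
        ((Submodule.span ℝ (⇑(latticeToReal L) '' {x : L | σ x = -x}) :
            Submodule ℝ (ℝ ⊗[ℤ] L)) : Set (ℝ ⊗[ℤ] L)) ∧
    (2 : ℤ) • h = 0 ∧
    ((¬ ∀ x : L, ∃ y : L, σ x - x = (2 : ℤ) • y) → h ≠ 0)}

/-- Injectivity of the map `L → ℝ ⊗ L` for a free `ℤ`-module. -/
lemma lat_inj (L : Type*) [AddCommGroup L] [Module.Free ℤ L] :
    Function.Injective (latticeToReal L) := by
  intro x y h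
  let e := Module.Free.chooseBasis ℤ L
  have := fun i => congrArg (fun v => (e.baseChange ℝ).repr v i) h
  simp only [show ∀ z, latticeToReal L z = (1 : ℝ) ⊗ₜ z from fun _ => rfl, Module.Basis.baseChange_repr_tmul] at this
  apply e.repr.injective
  ext i
  have := this i
  simpa using this

/-- If `t • (1 ⊗ b) = 1 ⊗ y` with `b ≠ 0` then `t` is an integer ratio, with explicit data. -/
lemma lat_smul (L : Type*) [AddCommGroup L] [Module.Free ℤ L] {t : ℝ} {b y : L} (hb : b ≠ 0)
    (h : t • latticeToReal L b = latticeToReal L y) :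
    ∃ c d : ℤ, d ≠ 0 ∧ d • y = c • b ∧ t * d = c := by
  let e := Module.Free.chooseBasis ℤ L
  have key : ∀ i, t * (e.repr b i : ℝ) = (e.repr y i : ℝ) := by
    intro i
    have := congrArg (fun v => (e.baseChange ℝ).repr v i) h
    simpa [show ∀ z, latticeToReal L z = (1 : ℝ) ⊗ₜ z from fun _ => rfl, mul_comm] using this
  obtain ⟨i, hi⟩ : ∃ i, e.repr b i ≠ 0 := by
    by_contra hc
    push_neg at hc
    exact hb (e.repr.injective (by ext j; simpa using hc j))
  refine ⟨e.repr y i, e.repr b i, hi, ?_, key i⟩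
  apply e.repr.injective
  ext j
  have h1 := key j
  have h2 := key i
  have hc : ((e.repr b i * e.repr y j : ℤ) : ℝ) = ((e.repr y i * e.repr b j : ℤ) : ℝ) := by
    push_cast
    rw [← h1, ← h2]; ring
  have h3 : (e.repr b i) * e.repr y j = e.repr y i * e.repr b j := by exact_mod_cast hc
  simp [h3, mul_comm]

/-- for a reflection `σ` on a lattice `L`, sending a strict marking `(b, β)`
to the class of `b/2` in `T = (ℝ ⊗ L)/L` induces a well-defined bijection between markings
of `σ` (strict markings up to sign) and the set of `h ∈ T` with `h ∈ T₀⁻(σ)`, `2h = 0`,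
and `h ≠ 0` if `σ` is nontrivial mod 2. -/
theorem stmt7 (L : Type*) [AddCommGroup L] [Module.Free ℤ L] [Module.Finite ℤ L]
    (σ : L →ₗ[ℤ] L) (hinv : σ ∘ₗ σ = LinearMap.id)
    (hrank : Module.finrank ℤ (LinearMap.ker (LinearMap.id + σ)) = 1) :
    (∀ p : L × (L →ₗ[ℤ] ℤ), IsStrictMarking σ p → markingImage p ∈ TorusMarkings σ) ∧
    (∀ p q : L × (L →ₗ[ℤ] ℤ), IsStrictMarking σ p → IsStrictMarking σ q →
      (markingImage p = markingImage q ↔ (p = q ∨ p = -q))) ∧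
    (∀ h ∈ TorusMarkings σ,
      ∃ p : L × (L →ₗ[ℤ] ℤ), IsStrictMarking σ p ∧ markingImage p = h) := by
  classical
  -- quotient group helpers
  have tmk_eq : ∀ z w : ℝ ⊗[ℤ] L, torusMk L z = torusMk L w ↔
      ∃ y : L, z - w = latticeToReal L y := by
    intro z w
    rw [torusMk, QuotientAddGroup.mk'_eq_mk']
    constructor
    · rintro ⟨u, hu, huw⟩
      rw [Submodule.mem_toAddSubgroup, LinearMap.mem_range] at hu
      obtain ⟨y, rfl⟩ := hu
      exact ⟨-y, by rw [map_neg, ← huw]; abel⟩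
    · rintro ⟨y, hy⟩
      refine ⟨latticeToReal L (-y), (Submodule.mem_toAddSubgroup _).mpr ⟨-y, rfl⟩, ?_⟩
      rw [map_neg, ← hy]; abel
  have tmk_zero : ∀ z : ℝ ⊗[ℤ] L, torusMk L z = 0 ↔ ∃ y : L, z = latticeToReal L y := by
    intro z
    have := tmk_eq z 0
    simpa using this
  have hσσ : ∀ x, σ (σ x) = x := by
    intro x
    have := LinearMap.ext_iff.mp hinv x
    simpa using this
  -- the kernel of `1 + σ` and its generator
  set K := LinearMap.ker (LinearMap.id + σ) with hK
  let bK : Module.Basis (Fin 1) ℤ K := Module.finBasisOfFinrankEq ℤ K hrank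
  set b₀ : L := (bK 0 : L) with hb₀def
  have hb₀ne : b₀ ≠ 0 := by
    rw [hb₀def]
    intro h
    exact bK.ne_zero 0 (Subtype.ext h)
  have hker_iff : ∀ x : L, σ x = -x ↔ x ∈ K := by
    intro x
    rw [hK, LinearMap.mem_ker, LinearMap.add_apply, LinearMap.id_apply]
    constructor
    · intro h; rw [h]; abel
    · intro h
      exact add_eq_zero_iff_eq_neg.mp (by rwa [add_comm] at h)
  have hσb₀ : σ b₀ = -b₀ := (hker_iff b₀).mpr (bK 0).2
  have hgen : ∀ x : L, σ x = -x → ∃ m : ℤ, x = m • b₀ := by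
    intro x hx
    have hxK : x ∈ K := (hker_iff x).mp hx
    refine ⟨bK.repr ⟨x, hxK⟩ 0, ?_⟩
    have h1 : (bK.repr ⟨x, hxK⟩ 0) • (bK 0) = (⟨x, hxK⟩ : K) := by
      conv_rhs => rw [← bK.sum_repr ⟨x, hxK⟩]
      simp
    rw [hb₀def]
    have h2 := congrArg Subtype.val h1
    simpa using h2.symm
  -- the coefficient functional β₀
  have hexists : ∀ x : L, ∃ m : ℤ, σ x - x = m • b₀ := by
    intro x
    refine hgen _ ?_
    rw [map_sub, hσσ]; abel
  choose f hf using hexists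
  have funiq : ∀ (x : L) (m : ℤ), σ x - x = m • b₀ → f x = m := by
    intro x m hm
    have h1 : f x • b₀ = m • b₀ := by rw [← hf x, hm]
    exact smul_left_injective ℤ hb₀ne h1
  let β₀ : L →ₗ[ℤ] ℤ :=
    { toFun := f
      map_add' := by
        intro x y
        apply funiq
        rw [map_add, add_smul, ← hf x, ← hf y]; abel
      map_smul' := by
        intro n x
        simp only [RingHom.id_apply, smul_eq_mul]
        apply funiq
        rw [map_smul, mul_smul, ← hf x, smul_sub] }
  have hmark₀ : IsStrictMarking σ ((b₀, β₀) : L × (L →ₗ[ℤ] ℤ)) := by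
    intro x
    show σ x = x + f x • b₀
    rw [← hf x]; abel
  -- structure of an arbitrary strict marking
  have hmk : ∀ (b : L) (β : L →ₗ[ℤ] ℤ), IsStrictMarking σ (b, β) →
      ∃ k : ℤ, (k = 1 ∨ k = -1 ∨ k = 2 ∨ k = -2) ∧ b = k • b₀ ∧ σ b = -b ∧
        ∀ x, β x * k = f x := by
    intro b β hp
    simp only [IsStrictMarking] at hp
    have hbne : b ≠ 0 := by
      intro hb0
      have h1 := hp b₀
      rw [hb0, smul_zero, add_zero, hσb₀] at h1
      have h2 : b₀ + b₀ = 0 := by nth_rewrite 1 [← h1]; abel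
      have h3 : (2 : ℤ) • b₀ = 0 := by rw [two_smul]; exact h2
      rcases smul_eq_zero.mp h3 with h | h
      · norm_num at h
      · exact hb₀ne h
    have hββ : β b₀ • b = -b₀ - b₀ := by
      have h1 : b₀ + β b₀ • b = -b₀ := by rw [← hp b₀, hσb₀]
      rw [← h1]; abel
    have hβb₀ne : β b₀ ≠ 0 := by
      intro h0
      rw [h0, zero_smul] at hββ
      have h2 : b₀ + b₀ = 0 := by rw [show b₀ + b₀ = -(-b₀ - b₀) from by abel, ← hββ]; abel
      have h3 : (2 : ℤ) • b₀ = 0 := by rw [two_smul]; exact h2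
      rcases smul_eq_zero.mp h3 with h | h
      · norm_num at h
      · exact hb₀ne h
    have hcoef : ∀ x : L, β x * (2 + β b) = 0 := by
      intro x
      have h1 := hσσ x
      rw [hp x, map_add, map_smul, hp x, hp b] at h1
      have h3 : (β x * (2 + β b)) • b = x + β x • b + β x • (b + β b • b) - x := by module
      rw [h1] at h3
      simp only [sub_self] at h3
      rcases smul_eq_zero.mp h3 with h | h
      · exact h
      · exact absurd h hbne
    have hβb : β b = -2 := by
      have h1 := hcoef b₀
      rcases mul_eq_zero.mp h1 with h | h
      · exact absurd h hβb₀ne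
      · linarith
    have hσb : σ b = -b := by
      rw [hp b, hβb]
      module
    obtain ⟨k, hbk⟩ := hgen b hσb
    have hk0 : k ≠ 0 := by
      intro h
      exact hbne (by rw [hbk, h, zero_smul])
    have hk2 : k * β b₀ = -2 := by
      have h1 : β b = k * β b₀ := by rw [hbk, map_smul, smul_eq_mul]
      rw [← h1, hβb]
    have hdvd : k ∣ 2 := ⟨-β b₀, by linarith⟩
    have hk1 := Int.le_of_dvd (by norm_num) hdvd
    have hk1' := Int.le_of_dvd (by norm_num) ((neg_dvd).mpr hdvd)
    refine ⟨k, by omega, hbk, hσb, ?_⟩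
    intro x
    refine (funiq x _ ?_).symm
    rw [show σ x - x = β x • b from by rw [hp x]; abel, hbk, smul_smul]
  refine ⟨?_, ?_, ?_⟩
  -- Part 1: strict markings land in the torus markings
  · rintro ⟨b, β⟩ hp
    obtain ⟨k, hkc, hbk, hσb, hrel⟩ := hmk b β hp
    refine ⟨⟨(2⁻¹ : ℝ) • latticeToReal L b, ?_, rfl⟩, ?_, ?_⟩
    · exact Submodule.smul_mem _ _ (Submodule.subset_span ⟨b, hσb, rfl⟩)
    · show (2 : ℤ) • torusMk L ((2⁻¹ : ℝ) • latticeToReal L b) = 0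
      rw [← map_zsmul]
      apply (tmk_zero _).mpr
      refine ⟨b, ?_⟩
      rw [← Int.cast_smul_eq_zsmul ℝ, smul_smul]
      norm_num
    · intro hnt h0
      apply hnt
      obtain ⟨y, hy⟩ := (tmk_zero _).mp h0
      have hb2y : b = (2 : ℤ) • y := by
        apply lat_inj L
        rw [map_smul, ← Int.cast_smul_eq_zsmul ℝ, ← hy, smul_smul]
        norm_num
      intro x
      refine ⟨β x • y, ?_⟩
      rw [hp x, hb2y, smul_comm]
      abel
  -- Part 2: injectivity up to sign
  · rintro ⟨b, β⟩ ⟨c, γ⟩ hp hq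
    obtain ⟨k, hkc, hbk, hσb, hrel⟩ := hmk b β hp
    obtain ⟨l, hlc, hcl, hσc, hrel'⟩ := hmk c γ hq
    have hk0 : k ≠ 0 := by omega
    have hl0 : l ≠ 0 := by omega
    constructor
    · intro hEq
      obtain ⟨y, hy⟩ := (tmk_eq _ _).mp hEq
      have hbc : b - c = (2 : ℤ) • y := by
        apply lat_inj L
        rw [map_sub, map_smul, ← Int.cast_smul_eq_zsmul ℝ, ← hy]
        module
      have hyker : σ y = -y := by
        have h1 : σ (b - c) = -(b - c) := by rw [map_sub, hσb, hσc]; abel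
        rw [hbc, map_smul] at h1
        have h2 : (2 : ℤ) • (σ y + y) = 0 := by rw [smul_add, h1]; abel
        rcases smul_eq_zero.mp h2 with h | h
        · norm_num at h
        · exact add_eq_zero_iff_eq_neg.mp h
      obtain ⟨m, hym⟩ := hgen y hyker
      have hbc' : (k - l) • b₀ = (2 * m) • b₀ := by
        rw [sub_smul, ← hbk, ← hcl, hbc, hym, mul_smul]
      have hkl : k - l = 2 * m := smul_left_injective ℤ hb₀ne hbc'
      have hkpm : k = l ∨ k = -l := by omega
      rcases hkpm with h | h
      · left
        have hb : b = c := by rw [hbk, hcl, h]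
        have hβ : β = γ := by
          ext x
          have e1 := hrel x
          rw [h] at e1
          exact mul_right_cancel₀ hl0 (by rw [e1, hrel' x])
        rw [hb, hβ]
      · right
        have hb : b = -c := by rw [hbk, hcl, h, neg_smul]
        have hβ : β = -γ := by
          ext x
          simp only [LinearMap.neg_apply]
          have e1 := hrel x
          rw [h] at e1
          have e3 : β x * (-l) = (-(γ x)) * (-l) := by rw [e1, ← hrel' x]; ring
          exact mul_right_cancel₀ (neg_ne_zero.mpr hl0) e3
        rw [hb, hβ]
        rfl
    · rintro (h | h)
      · rw [h]
      · rw [h]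
        apply (tmk_eq _ _).mpr
        refine ⟨-c, ?_⟩
        show (2⁻¹ : ℝ) • latticeToReal L (-c) - (2⁻¹ : ℝ) • latticeToReal L c =
          latticeToReal L (-c)
        rw [map_neg]
        module
  -- Part 3: surjectivity
  · rintro h ⟨⟨z, hzmem, rfl⟩, h2, h3⟩
    have hle : (Submodule.span ℝ (⇑(latticeToReal L) '' {x : L | σ x = -x})) ≤
        Submodule.span ℝ {latticeToReal L b₀} := by
      rw [Submodule.span_le]
      rintro _ ⟨x, hx, rfl⟩
      obtain ⟨m, rfl⟩ := hgen x hx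
      rw [map_smul, ← Int.cast_smul_eq_zsmul ℝ]
      exact Submodule.smul_mem _ _ (Submodule.subset_span rfl)
    obtain ⟨t, hzt⟩ := Submodule.mem_span_singleton.mp (hle hzmem)
    rw [← map_zsmul] at h2
    obtain ⟨y, hy⟩ := (tmk_zero _).mp h2
    have hy' : (2 * t) • latticeToReal L b₀ = latticeToReal L y := by
      rw [← hy, ← hzt, ← Int.cast_smul_eq_zsmul ℝ, smul_smul]
      norm_num
    obtain ⟨c, d, hd0, hdy, hcd⟩ := lat_smul L hb₀ne hy'
    have hyker : σ y = -y := by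
      have h1 : d • σ y = -(d • y) := by
        rw [← map_smul, hdy, map_smul, hσb₀, smul_neg, ← hdy]
      have h2' : d • (σ y + y) = 0 := by rw [smul_add, h1]; abel
      rcases smul_eq_zero.mp h2' with hh | hh
      · exact absurd hh hd0
      · exact add_eq_zero_iff_eq_neg.mp hh
    obtain ⟨m, hym⟩ := hgen y hyker
    have hdm : d * m = c := by
      apply smul_left_injective ℤ hb₀ne
      show (d * m) • b₀ = c • b₀
      rw [mul_smul, ← hym, hdy]
    have h2t : 2 * t = (m : ℝ) := by
      have hdR : (d : ℝ) ≠ 0 := Int.cast_ne_zero.mpr hd0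
      apply mul_right_cancel₀ hdR
      rw [hcd, ← hdm]
      push_cast
      ring
    rcases Int.even_or_odd m with ⟨r, hr⟩ | ⟨r, hr⟩
    · -- even case: the class is zero, σ is trivial mod 2
      have h0 : torusMk L z = 0 := by
        apply (tmk_zero _).mpr
        refine ⟨r • b₀, ?_⟩
        rw [map_smul, ← Int.cast_smul_eq_zsmul ℝ, ← hzt]
        congr 1
        have hmr : (m : ℝ) = r + r := by exact_mod_cast hr
        linarith
      have htriv : ∀ x : L, ∃ w : L, σ x - x = (2 : ℤ) • w := by
        by_contra hc
        exact h3 hc h0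
      have heven : ∀ x, ∃ cx : ℤ, f x = 2 * cx := by
        intro x
        obtain ⟨w, hw⟩ := htriv x
        have hwker : σ w = -w := by
          have h1 : σ (σ x - x) = -(σ x - x) := by rw [map_sub, hσσ]; abel
          rw [hw, map_smul] at h1
          have h2' : (2 : ℤ) • (σ w + w) = 0 := by rw [smul_add, h1]; abel
          rcases smul_eq_zero.mp h2' with hh | hh
          · norm_num at hh
          · exact add_eq_zero_iff_eq_neg.mp hh
        obtain ⟨mw, hmw⟩ := hgen w hwker
        refine ⟨mw, funiq x (2 * mw) ?_⟩
        rw [hw, hmw, mul_smul]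
      have hg : ∀ x, f x = 2 * (f x / 2) := by
        intro x
        obtain ⟨cx, hcx⟩ := heven x
        omega
      let β' : L →ₗ[ℤ] ℤ :=
        { toFun := fun x => f x / 2
          map_add' := by
            intro x y
            show f (x + y) / 2 = f x / 2 + f y / 2
            have h1 : f (x + y) = f x + f y := β₀.map_add x y
            have e1 := hg (x + y); have e2 := hg x; have e3 := hg y
            omega
          map_smul' := by
            intro n x
            simp only [RingHom.id_apply, smul_eq_mul]
            show f (n • x) / 2 = n * (f x / 2)
            have h1 : f (n • x) = n * f x :=
              funiq _ _ (by rw [map_smul, ← smul_sub, hf x, smul_smul])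
            have key : 2 * (f (n • x) / 2) = 2 * (n * (f x / 2)) := by
              rw [← hg (n • x), h1]
              conv_lhs => rw [hg x]
              ring
            linarith }
      refine ⟨((2 : ℤ) • b₀, β'), ?_, ?_⟩
      · intro x
        show σ x = x + (f x / 2) • ((2 : ℤ) • b₀)
        rw [smul_smul, mul_comm, ← hg x, ← hf x]
        abel
      · rw [h0]
        apply (tmk_zero _).mpr
        refine ⟨b₀, ?_⟩
        show (2⁻¹ : ℝ) • latticeToReal L ((2 : ℤ) • b₀) = latticeToReal L b₀
        rw [map_smul, ← Int.cast_smul_eq_zsmul ℝ, smul_smul]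
        norm_num
    · -- odd case: the class is that of b₀/2
      refine ⟨(b₀, β₀), hmark₀, ?_⟩
      apply (tmk_eq _ _).mpr
      refine ⟨(-r) • b₀, ?_⟩
      show (2⁻¹ : ℝ) • latticeToReal L b₀ - z = latticeToReal L ((-r) • b₀)
      rw [map_smul, ← Int.cast_smul_eq_zsmul ℝ, ← hzt, ← sub_smul]
      congr 1
      have hmr : (m : ℝ) = 2 * r + 1 := by exact_mod_cast hr
      push_cast
      linarith
end

section
/- Let (R, {n_r}) be a semisimple root system in a lattice L, i.e. ⋂_{r∈R} ker(n_r) = 0. Let V = ℝ ⊗ L and for each r ∈ R let s_r : V → V be the ℝ-linear extension of σ_r. Then (V, R) is a reduced geometric root system: (i) R spans V and 0 ∉ R; (ii) for each r ∈ R, s_r is a linear involution whose fixed subspace is a hyperplane, s_r(r) = −r, and s_r(R) = R; (iii) for all r, t ∈ R, s_r(t) − t is an integer multiple of r; (iv) for each r ∈ R, the only elements of R that are real multiples of r are r and −r. -/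
open scoped TensorProduct

/-- A root system in a lattice `L` (axioms (R1)–(R4)). -/
def IsRootSystem {L : Type*} [AddCommGroup L] (R : Set L) (n : L → (L →ₗ[ℤ] ℤ)) : Prop :=
  R.Finite ∧
  Submodule.span ℚ
      (⇑(TensorProduct.mk ℤ ℚ L 1) '' (R ∪ {y : L | ∀ r ∈ R, n r y = 0})) = ⊤ ∧
  (∀ r ∈ R, n r r = -2) ∧
  (∀ r ∈ R, ∀ k : ℤ, k • r ∈ R → k = 1 ∨ k = -1) ∧
  (∀ r ∈ R, ∀ t ∈ R, t + n r t • r ∈ R)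

/-- The reflection `σ_r : x ↦ x + n_r(x)·r` associated to a root `r`. -/
def rootRefl {L : Type*} [AddCommGroup L] (n : L → (L →ₗ[ℤ] ℤ)) (r : L) : L →ₗ[ℤ] L :=
  LinearMap.id + (n r).smulRight r

section Helpers

variable {L : Type*} [AddCommGroup L]

lemma ltr_inj [Module.Free ℤ L] : Function.Injective (latticeToReal L) := by
  have hf : Function.Injective (Algebra.linearMap ℤ ℝ) := fun a b hab => by
    simpa using hab
  have h := Module.Flat.rTensor_preserves_injective_linearMap (M := L)
    (Algebra.linearMap ℤ ℝ) hf
  intro x y hxy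
  have h2 : (Algebra.linearMap ℤ ℝ).rTensor L ((TensorProduct.lid ℤ L).symm x) =
      (Algebra.linearMap ℤ ℝ).rTensor L ((TensorProduct.lid ℤ L).symm y) := by
    simp [latticeToReal]
    exact hxy
  exact (TensorProduct.lid ℤ L).symm.injective (h h2)

lemma rootRefl_apply (n : L → (L →ₗ[ℤ] ℤ)) (r x : L) :
    rootRefl n r x = x + n r x • r := rfl

lemma rootRefl_inv (n : L → (L →ₗ[ℤ] ℤ)) (r : L) (hrr : n r r = -2) :
    rootRefl n r ∘ₗ rootRefl n r = LinearMap.id := by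
  ext x
  simp only [LinearMap.comp_apply, rootRefl_apply, LinearMap.id_apply, map_add, map_smul,
    hrr, smul_eq_mul]
  module

lemma ltr_baseChange (f : L →ₗ[ℤ] L) (x : L) :
    LinearMap.baseChange ℝ f (latticeToReal L x) = latticeToReal L (f x) := rfl

lemma ltr_zsmul (m : ℤ) (x : L) :
    latticeToReal L (m • x) = (m : ℝ) • latticeToReal L x := by
  rw [map_zsmul, Int.cast_smul_eq_zsmul]

lemma pairing_eq (f : L →ₗ[ℤ] ℤ) (t r : L) (c : ℝ)
    (hle : latticeToReal L t = c • latticeToReal L r) :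
    (f t : ℝ) = c * (f r : ℝ) := by
  have h := congrArg (fun v => (TensorProduct.AlgebraTensorModule.rid ℤ ℝ ℝ)
      (LinearMap.baseChange ℝ f v)) hle
  simp only [map_smul] at h
  have l1 : ∀ x : L, (TensorProduct.AlgebraTensorModule.rid ℤ ℝ ℝ)
      (LinearMap.baseChange ℝ f (latticeToReal L x)) = (f x : ℝ) := by
    intro x
    rw [show LinearMap.baseChange ℝ f (latticeToReal L x) = (1:ℝ) ⊗ₜ[ℤ] (f x) from rfl,
      TensorProduct.AlgebraTensorModule.rid_tmul]
    simp
  rw [l1, l1] at h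
  rw [h, smul_eq_mul]

lemma hyperplane [Module.Free ℤ L] [Module.Finite ℤ L] (n : L → (L →ₗ[ℤ] ℤ)) (r : L)
    (hrr : n r r = -2) (hrne : latticeToReal L r ≠ 0) :
    Module.finrank ℝ
        (LinearMap.ker (LinearMap.baseChange ℝ (rootRefl n r) - LinearMap.id)) + 1 =
      Module.finrank ℝ (ℝ ⊗[ℤ] L) := by
  set D := LinearMap.baseChange ℝ (rootRefl n r) - LinearMap.id with hDdef
  have hD : D = LinearMap.baseChange ℝ ((n r).smulRight r) := by
    rw [hDdef, rootRefl, LinearMap.baseChange_add, LinearMap.baseChange_id]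
    abel
  have hrange : LinearMap.range D = Submodule.span ℝ {latticeToReal L r} := by
    apply le_antisymm
    · rintro _ ⟨v, rfl⟩
      induction v using TensorProduct.induction_on with
      | zero => simp
      | tmul a x =>
        rw [hD, LinearMap.baseChange_tmul, LinearMap.smulRight_apply,
          TensorProduct.tmul_smul, ← Int.cast_smul_eq_zsmul ℝ]
        have ha : a ⊗ₜ[ℤ] r = a • ((1:ℝ) ⊗ₜ[ℤ] r) := by
          rw [TensorProduct.smul_tmul', smul_eq_mul, mul_one]
        rw [ha]
        exact Submodule.smul_mem _ _ (Submodule.smul_mem _ _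
          (Submodule.mem_span_singleton_self _))
      | add u v hu hv => rw [map_add]; exact Submodule.add_mem _ hu hv
    · rw [Submodule.span_singleton_le_iff_mem]
      refine ⟨(-(1:ℝ)/2) • latticeToReal L r, ?_⟩
      rw [hD, map_smul, ltr_baseChange, LinearMap.smulRight_apply, hrr, ltr_zsmul]
      rw [smul_smul]
      norm_num
  have hrk : Module.finrank ℝ (LinearMap.range D) = 1 := by
    rw [hrange, finrank_span_singleton hrne]
  have := LinearMap.finrank_range_add_finrank_ker D
  omega

end Helpers

/-- a semisimple root system `(R, n)` in `L` yields a reduced geometric root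
system `(V, R)` with `V = ℝ ⊗ L` and `s_r` the real extension of `σ_r`. -/
theorem stmt9 (L : Type*) [AddCommGroup L] [Module.Free ℤ L] [Module.Finite ℤ L]
    (R : Set L) (n : L → (L →ₗ[ℤ] ℤ)) (h : IsRootSystem R n)
    (hss : (⨅ r ∈ R, LinearMap.ker (n r)) = ⊥) :
    -- (i) R spans V and does not contain 0
    ((0 : L) ∉ R ∧
      Submodule.span ℝ (⇑(latticeToReal L) '' R) = ⊤) ∧
    -- (ii) each s_r is an involution with hyperplane fixed space, s_r(r) = −r, s_r(R) = R
    (∀ r ∈ R,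
      LinearMap.baseChange ℝ (rootRefl n r) ∘ₗ LinearMap.baseChange ℝ (rootRefl n r) =
        LinearMap.id ∧
      Module.finrank ℝ
          (LinearMap.ker (LinearMap.baseChange ℝ (rootRefl n r) - LinearMap.id)) + 1 =
        Module.finrank ℝ (ℝ ⊗[ℤ] L) ∧
      LinearMap.baseChange ℝ (rootRefl n r) (latticeToReal L r) = -(latticeToReal L r) ∧
      ⇑(LinearMap.baseChange ℝ (rootRefl n r)) '' (⇑(latticeToReal L) '' R) =
        ⇑(latticeToReal L) '' R) ∧
    -- (iii) s_r(t) − t is an integral multiple of r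
    (∀ r ∈ R, ∀ t ∈ R, ∃ m : ℤ,
      LinearMap.baseChange ℝ (rootRefl n r) (latticeToReal L t) - latticeToReal L t =
        (m : ℝ) • latticeToReal L r) ∧
    -- (iv) reducedness: the only roots proportional to r are ±r
    (∀ r ∈ R, -r ∈ R ∧
      ∀ t ∈ R, ∀ c : ℝ, latticeToReal L t = c • latticeToReal L r → t = r ∨ t = -r) := by
  obtain ⟨hfin, hspan, hR2, hR3, hR4⟩ := h
  -- basic facts
  have h0R : (0 : L) ∉ R := by
    intro h0
    have := hR2 0 h0
    simp at this
  have hrne : ∀ r ∈ R, latticeToReal L r ≠ 0 := by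
    intro r hr hc
    rw [show (0 : ℝ ⊗[ℤ] L) = latticeToReal L 0 from (map_zero _).symm] at hc
    exact h0R (ltr_inj hc ▸ hr)
  have hsigma : ∀ r ∈ R, ∀ t ∈ R, rootRefl n r t ∈ R := by
    intro r hr t ht
    rw [rootRefl_apply]
    exact hR4 r hr t ht
  have hinv : ∀ r ∈ R,
      LinearMap.baseChange ℝ (rootRefl n r) ∘ₗ LinearMap.baseChange ℝ (rootRefl n r) =
        LinearMap.id := by
    intro r hr
    rw [← LinearMap.baseChange_comp, rootRefl_inv n r (hR2 r hr), LinearMap.baseChange_id]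
  refine ⟨⟨h0R, ?_⟩, ?_, ?_, ?_⟩
  · -- spanning
    have hker : {y : L | ∀ r ∈ R, n r y = 0} = {0} := by
      ext y
      simp only [Set.mem_setOf_eq, Set.mem_singleton_iff]
      constructor
      · intro hy
        have hmem : y ∈ (⨅ r ∈ R, LinearMap.ker (n r)) := by
          simp only [Submodule.mem_iInf, LinearMap.mem_ker]
          exact hy
        rwa [hss, Submodule.mem_bot] at hmem
      · rintro rfl
        simp
    have hspanQ : Submodule.span ℚ (⇑(TensorProduct.mk ℤ ℚ L 1) '' R) = ⊤ := by
      rw [hker, Set.image_union, Set.image_singleton, map_zero, Submodule.span_union,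
        Submodule.span_zero_singleton, sup_bot_eq] at hspan
      exact hspan
    have h3 : Submodule.span ℝ
        (⇑(TensorProduct.mk ℚ ℝ (ℚ ⊗[ℤ] L) 1) '' (⇑(TensorProduct.mk ℤ ℚ L 1) '' R)) = ⊤ := by
      rw [← Submodule.baseChange_span, hspanQ, Submodule.baseChange_top]
    set e := (TensorProduct.AlgebraTensorModule.cancelBaseChange ℤ ℚ ℝ ℝ L)
    have h4 := congrArg (Submodule.map (e.toLinearMap)) h3
    rw [Submodule.map_span, Submodule.map_top, LinearEquiv.range] at h4
    rw [← h4]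
    congr 1
    rw [Set.image_image, Set.image_image]
    apply Set.image_congr
    intro x _
    symm
    show e ((1:ℝ) ⊗ₜ ((1:ℚ) ⊗ₜ x)) = (1:ℝ) ⊗ₜ x
    rw [TensorProduct.AlgebraTensorModule.cancelBaseChange_tmul]
    norm_num
  · -- (ii)
    intro r hr
    refine ⟨hinv r hr, hyperplane n r (hR2 r hr) (hrne r hr), ?_, ?_⟩
    · rw [ltr_baseChange, rootRefl_apply, hR2 r hr, ← map_neg]
      congr 1
      module
    · apply Set.Subset.antisymm
      · rintro _ ⟨_, ⟨t, ht, rfl⟩, rfl⟩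
        rw [ltr_baseChange]
        exact Set.mem_image_of_mem _ (hsigma r hr t ht)
      · rintro _ ⟨t, ht, rfl⟩
        refine ⟨latticeToReal L (rootRefl n r t),
          Set.mem_image_of_mem _ (hsigma r hr t ht), ?_⟩
        rw [ltr_baseChange]
        have hcomp := LinearMap.congr_fun (rootRefl_inv n r (hR2 r hr)) t
        simp only [LinearMap.comp_apply, LinearMap.id_apply] at hcomp
        rw [hcomp]
  · -- (iii)
    intro r hr t ht
    refine ⟨n r t, ?_⟩
    rw [ltr_baseChange, rootRefl_apply, map_add, ltr_zsmul]
    abel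
  · -- (iv)
    intro r hr
    have hnegr : -r ∈ R := by
      have := hR4 r hr r hr
      rw [hR2 r hr] at this
      have heq : r + (-2 : ℤ) • r = -r := by module
      rwa [heq] at this
    refine ⟨hnegr, ?_⟩
    intro t ht c hle
    have hk : ((n r t : ℤ) : ℝ) = -2 * c := by
      rw [pairing_eq (n r) t r c hle, hR2 r hr]
      push_cast
      ring
    have hj : (-2 : ℝ) = c * ((n t r : ℤ) : ℝ) := by
      rw [← pairing_eq (n t) t r c hle, hR2 t ht]
      norm_num
    have hkj : n r t * n t r = 4 := by
      have hc : ((n r t * n t r : ℤ) : ℝ) = 4 := by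
        push_cast
        rw [hk, mul_assoc, ← hj]
        norm_num
      exact_mod_cast hc
    have hd : n r t ∣ 4 := ⟨n t r, hkj.symm⟩
    have hb1 : n r t ≤ 4 := Int.le_of_dvd (by norm_num) hd
    have hb2 : -4 ≤ n r t := by
      have := Int.le_of_dvd (b := 4) (by norm_num) ((neg_dvd).mpr hd)
      omega
    obtain ⟨m, hm⟩ : ∃ m, n r t = m := ⟨_, rfl⟩
    rw [hm] at hk hkj hb1 hb2
    interval_cases m
    · -- m = -4 : c = 2, t = 2 • r, contra via R3
      exfalso
      have hc2 : c = 2 := by push_cast at hk; linarith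
      have ht2 : latticeToReal L t = latticeToReal L ((2:ℤ) • r) := by
        rw [ltr_zsmul, hle, hc2]; norm_num
      have := hR3 r hr 2 (ltr_inj ht2 ▸ ht)
      omega
    · omega
    · -- m = -2 : c = 1, t = r
      left
      have hc2 : c = 1 := by push_cast at hk; linarith
      apply ltr_inj
      rw [hle, hc2, one_smul]
    · -- m = -1 : c = 1/2, r = 2 • t, contra
      exfalso
      have hc2 : c = 1/2 := by push_cast at hk; linarith
      have hr2 : latticeToReal L ((2:ℤ) • t) = latticeToReal L r := by
        rw [ltr_zsmul, hle, hc2, smul_smul]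
        norm_num
      have := hR3 t ht 2 (ltr_inj hr2 ▸ hr)
      omega
    · omega
    · -- m = 1 : c = -1/2, r = -2 • t, contra
      exfalso
      have hc2 : c = -1/2 := by push_cast at hk; linarith
      have hr2 : latticeToReal L ((-2:ℤ) • t) = latticeToReal L r := by
        rw [ltr_zsmul, hle, hc2, smul_smul]
        norm_num
      have := hR3 t ht (-2) (ltr_inj hr2 ▸ hr)
      omega
    · -- m = 2 : c = -1, t = -r
      right
      have hc2 : c = -1 := by push_cast at hk; linarith
      apply ltr_inj
      rw [hle, hc2, map_neg]
      module
    · omega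
    · -- m = 4 : c = -2, t = -2 • r, contra
      exfalso
      have hc2 : c = -2 := by push_cast at hk; linarith
      have ht2 : latticeToReal L t = latticeToReal L ((-2:ℤ) • r) := by
        rw [ltr_zsmul, hle, hc2]; norm_num
      have := hR3 r hr (-2) (ltr_inj ht2 ▸ ht)
      omega
end

section
/- Let V be a finite-dimensional real vector space and R ⊆ V a reduced geometric root system: R is finite, spans V, and does not contain 0; for each r ∈ R there is given a linear involution s_r of V whose fixed subspace is a hyperplane, with s_r(r) = −r and s_r(R) = R; for all r, t ∈ R, s_r(t) − t is an integer multiple of r; and for each r ∈ R the only elements of R proportional to r are ±r. For r ∈ R define H_r : V → ℝ by s_r(x) = x + H_r(x)·r. Let L_min be the additive subgroup of V generated by R and L_max = {x ∈ V : H_r(x) ∈ ℤ for all r ∈ R}. Then for any additive subgroup L of V with L_min ⊆ L ⊆ L_max: L is a free abelian group of rank dim V, R ⊆ L, each H_r restricts to a homomorphism L → ℤ, and (R, {H_r restricted to L}) is a root system in L satisfying ⋂_{r∈R} ker(H_r|_L) = 0 (a semisimple root system). -/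
open scoped TensorProduct

open Module

private lemma aux_pos_form (V : Type*) [AddCommGroup V] [Module ℝ V] [FiniteDimensional ℝ V]
    (M : Submonoid (Module.End ℝ V)) (hMfin : (M : Set (Module.End ℝ V)).Finite) :
    ∃ B : V →ₗ[ℝ] V →ₗ[ℝ] ℝ,
      (∀ x : V, x ≠ 0 → 0 < B x x) ∧
      (∀ g ∈ M, g * g = 1 → ∀ x y : V, B (g x) (g y) = B x y) := by
  classical
  set b := Module.finBasis ℝ V with hb
  set B₀ : V →ₗ[ℝ] V →ₗ[ℝ] ℝ := ∑ i, (b.coord i).smulRight (b.coord i) with hB₀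
  have hB₀app : ∀ u v : V, B₀ u v = ∑ i, b.coord i u * b.coord i v := by
    intro u v
    simp [hB₀, LinearMap.sum_apply, LinearMap.smulRight_apply, smul_eq_mul]
  have hB₀nonneg : ∀ u : V, 0 ≤ B₀ u u := by
    intro u
    rw [hB₀app]
    exact Finset.sum_nonneg fun i _ => mul_self_nonneg _
  have hB₀pos : ∀ u : V, u ≠ 0 → 0 < B₀ u u := by
    intro u hu
    rw [hB₀app]
    obtain ⟨i, hi⟩ : ∃ i, b.coord i u ≠ 0 := by
      by_contra hc
      push_neg at hc
      exact hu (b.forall_coord_eq_zero_iff.mp hc)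
    exact Finset.sum_pos' (fun j _ => mul_self_nonneg _)
      ⟨i, Finset.mem_univ i, mul_self_pos.mpr hi⟩
  set B : V →ₗ[ℝ] V →ₗ[ℝ] ℝ :=
      ∑ g ∈ hMfin.toFinset, (B₀.comp g).compl₂ g with hBdef
  have hBapp : ∀ u v : V, B u v = ∑ g ∈ hMfin.toFinset, B₀ (g u) (g v) := by
    intro u v
    simp [hBdef, LinearMap.sum_apply, LinearMap.compl₂_apply, LinearMap.comp_apply]
  have h1mem : (1 : Module.End ℝ V) ∈ hMfin.toFinset := by
    simp only [Set.Finite.mem_toFinset, SetLike.mem_coe]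
    exact M.one_mem
  refine ⟨B, ?_, ?_⟩
  · intro x hx
    rw [hBapp]
    refine Finset.sum_pos' (fun g _ => hB₀nonneg _) ⟨1, h1mem, ?_⟩
    simpa using hB₀pos x hx
  · intro g hg hgg x y
    rw [hBapp, hBapp]
    refine Finset.sum_nbij' (fun a => a * g) (fun a => a * g) ?_ ?_ ?_ ?_ ?_
    · intro a ha
      simp only [Set.Finite.mem_toFinset, SetLike.mem_coe] at ha ⊢
      exact M.mul_mem ha hg
    · intro a ha
      simp only [Set.Finite.mem_toFinset, SetLike.mem_coe] at ha ⊢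
      exact M.mul_mem ha hg
    · intro a _
      show a * g * g = a
      rw [mul_assoc, hgg, mul_one]
    · intro a _
      show a * g * g = a
      rw [mul_assoc, hgg, mul_one]
    · intro a _
      simp [Module.End.mul_apply]

private lemma aux_closure_finite (V : Type*) [AddCommGroup V] [Module ℝ V]
    (R : Set V) (hfin : R.Finite) (hspan : Submodule.span ℝ R = ⊤)
    (S : Set (Module.End ℝ V)) (hS : ∀ g ∈ S, ∀ t ∈ R, g t ∈ R) :
    ((Submonoid.closure S : Submonoid (Module.End ℝ V)) : Set (Module.End ℝ V)).Finite := by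
  classical
  have hstab : ∀ g ∈ Submonoid.closure S, ∀ t ∈ R, g t ∈ R := by
    intro g hg
    induction hg using Submonoid.closure_induction with
    | mem x hx => exact hS x hx
    | one => intro t ht; simpa using ht
    | mul x y hx hy ihx ihy =>
        intro t ht
        have := ihy t ht
        simpa [Module.End.mul_apply] using ihx _ this
  have : Finite ↥R := hfin.to_subtype
  set f : ((Submonoid.closure S : Submonoid (Module.End ℝ V)) : Set (Module.End ℝ V)) → (↥R → ↥R) :=
    fun g t => ⟨g.1 t.1, hstab g.1 g.2 t.1 t.2⟩ with hf
  have hfinj : Function.Injective f := by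
    intro g g' h
    ext1
    apply LinearMap.ext_on hspan
    intro t ht
    have h2 := congrFun h ⟨t, ht⟩
    exact congrArg Subtype.val h2
  exact Set.finite_coe_iff.mp (Finite.of_injective f hfinj)

/-- a reduced geometric root system `(V, R)` together with a lattice
`L_min ⊆ L ⊆ L_max` determines a semisimple root system `(R, {H_r|_L})` in `L`. -/
theorem stmt10 (V : Type*) [AddCommGroup V] [Module ℝ V] [FiniteDimensional ℝ V]
    (R : Set V) (s : V → (V →ₗ[ℝ] V)) (H : V → (V →ₗ[ℝ] ℝ))
    (hfin : R.Finite) (hspan : Submodule.span ℝ R = ⊤) (h0 : (0 : V) ∉ R)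
    (hinv : ∀ r ∈ R, s r ∘ₗ s r = LinearMap.id)
    (hhyp : ∀ r ∈ R,
      Module.finrank ℝ (LinearMap.ker (s r - LinearMap.id)) + 1 = Module.finrank ℝ V)
    (hneg : ∀ r ∈ R, s r r = -r)
    (hperm : ∀ r ∈ R, ⇑(s r) '' R = R)
    (hint : ∀ r ∈ R, ∀ t ∈ R, ∃ m : ℤ, s r t - t = (m : ℝ) • r)
    (hred : ∀ r ∈ R, ∀ t ∈ R, ∀ c : ℝ, t = c • r → t = r ∨ t = -r)
    (hH : ∀ r ∈ R, ∀ x : V, s r x = x + H r x • r)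
    (Lsub : AddSubgroup V)
    (hmin : AddSubgroup.closure R ≤ Lsub)
    (hmax : ∀ x ∈ Lsub, ∀ r ∈ R, ∃ m : ℤ, H r x = (m : ℝ)) :
    Module.Free ℤ ↥Lsub ∧ Module.Finite ℤ ↥Lsub ∧
    Module.finrank ℤ ↥Lsub = Module.finrank ℝ V ∧
    (∀ r ∈ R, r ∈ Lsub) ∧
    ∃ n : ↥Lsub → (↥Lsub →ₗ[ℤ] ℤ),
      (∀ r : ↥Lsub, (r : V) ∈ R → ∀ x : ↥Lsub, ((n r x : ℤ) : ℝ) = H (r : V) (x : V)) ∧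
      IsRootSystem {x : ↥Lsub | (x : V) ∈ R} n ∧
      (⨅ r ∈ {x : ↥Lsub | (x : V) ∈ R}, LinearMap.ker (n r)) = ⊥ := by
  classical
  -- membership of R in the lattice
  have hsubL : ∀ r ∈ R, r ∈ Lsub := fun r hr => hmin (AddSubgroup.subset_closure hr)
  have hRne : ∀ r ∈ R, r ≠ 0 := fun r hr h => h0 (h ▸ hr)
  -- H r r = -2
  have hHrr : ∀ r ∈ R, H r r = -2 := by
    intro r hr
    have h1 : r + H r r • r = -r := by rw [← hH r hr r, hneg r hr]
    have h4 : H r r • r = -r - r := by rwa [add_comm, ← eq_sub_iff_add_eq] at h1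
    have h5 : (H r r + 2) • r = 0 := by
      rw [add_smul, h4, two_smul]; abel
    rcases smul_eq_zero.mp h5 with h | h
    · linarith
    · exact absurd h (hRne r hr)
  -- a basis of V made of roots
  obtain ⟨sset, hsubR, hspan_s, hli⟩ := exists_linearIndependent ℝ R
  have hssfin : sset.Finite := hfin.subset hsubR
  have : Finite ↥sset := hssfin.to_subtype
  have : Fintype ↥sset := Fintype.ofFinite _
  have hspan_s' : Submodule.span ℝ sset = ⊤ := hspan_s.trans hspan
  have hb_span : ⊤ ≤ Submodule.span ℝ (Set.range (Subtype.val : ↥sset → V)) := by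
    rw [Subtype.range_coe, hspan_s']
  set b : Basis ↥sset ℝ V := Basis.mk hli hb_span with hbdef
  have hbapp : ∀ i : ↥sset, b i = i.1 := fun i => Basis.mk_apply hli hb_span i
  -- the invariant positive definite form
  have hstabS : ∀ g ∈ s '' R, ∀ t ∈ R, g t ∈ R := by
    rintro g ⟨r, hr, rfl⟩ t ht
    exact (hperm r hr) ▸ Set.mem_image_of_mem _ ht
  have hsR : ∀ r ∈ R, s r ∈ Submonoid.closure (s '' R) :=
    fun r hr => Submonoid.subset_closure (Set.mem_image_of_mem _ hr)
  have hss : ∀ r ∈ R, s r * s r = 1 := by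
    intro r hr
    exact (Module.End.mul_eq_comp _ _).trans ((hinv r hr).trans Module.End.one_eq_id.symm)
  obtain ⟨B, hBpos, hBinv⟩ := aux_pos_form V (Submonoid.closure (s '' R))
    (aux_closure_finite V R hfin hspan _ hstabS)
  -- key identity
  have key : ∀ r ∈ R, ∀ x : V, H r x = 0 → B x r = 0 := by
    intro r hr x hx
    have h1 := hBinv (s r) (hsR r hr) (hss r hr) x r
    rw [hneg r hr, hH r hr x, hx, zero_smul, add_zero] at h1
    have h2 : B x (-r) = -(B x r) := by rw [map_neg]
    rw [h2] at h1
    linarith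
  -- core injectivity
  have hcore : ∀ x : V, (∀ t ∈ sset, H t x = 0) → x = 0 := by
    intro x hx
    have hBx : B x = 0 := by
      apply LinearMap.ext_on hspan_s'
      intro t ht
      simpa using key t (hsubR ht) x (hx t ht)
    by_contra hne
    have hpos := hBpos x hne
    rw [hBx] at hpos
    simp at hpos
  -- integer-valued functionals on the lattice
  have hmax' : ∀ (r : V), r ∈ R → ∀ x : ↥Lsub, ∃ m : ℤ, H r x.1 = (m : ℝ) :=
    fun r hr x => hmax x.1 x.2 r hr
  have hnadd : ∀ (r : V) (hr : r ∈ R) (x y : ↥Lsub),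
      (hmax' r hr (x + y)).choose = (hmax' r hr x).choose + (hmax' r hr y).choose := by
    intro r hr x y
    have h1 : (((hmax' r hr (x + y)).choose : ℤ) : ℝ)
        = (((hmax' r hr x).choose + (hmax' r hr y).choose : ℤ) : ℝ) := by
      push_cast
      rw [← (hmax' r hr (x+y)).choose_spec, ← (hmax' r hr x).choose_spec,
        ← (hmax' r hr y).choose_spec]
      have hxy : ((x + y : ↥Lsub) : V) = (x : V) + (y : V) := rfl
      rw [hxy, map_add]
    exact_mod_cast h1
  set nlin : ∀ r ∈ R, (↥Lsub →ₗ[ℤ] ℤ) :=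
    fun r hr => (AddMonoidHom.mk' (fun x => (hmax' r hr x).choose) (hnadd r hr)).toIntLinearMap
    with hnlin
  have hnlin_spec : ∀ (r : V) (hr : r ∈ R) (x : ↥Lsub), ((nlin r hr x : ℤ) : ℝ) = H r x.1 :=
    fun r hr x => ((hmax' r hr x).choose_spec).symm
  -- the integer embedding
  set ψ : ↥Lsub →ₗ[ℤ] (↥sset → ℤ) := LinearMap.pi (fun i => nlin i.1 (hsubR i.2)) with hψ
  have hψinj : Function.Injective ψ := by
    rw [← LinearMap.ker_eq_bot, LinearMap.ker_eq_bot']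
    intro x hx
    have hx' : ∀ t ∈ sset, H t x.1 = 0 := by
      intro t ht
      have h1 : nlin t (hsubR ht) x = 0 := by
        have := congrFun hx ⟨t, ht⟩
        simpa [hψ, LinearMap.pi_apply] using this
      have := hnlin_spec t (hsubR ht) x
      rw [h1] at this
      simpa using this.symm
    exact Subtype.ext ((hcore x.1 hx').trans rfl)
  obtain ⟨m, bsub⟩ := Submodule.basisOfPid (Pi.basisFun ℤ ↥sset) (LinearMap.range ψ)
  have e : ↥Lsub ≃ₗ[ℤ] LinearMap.range ψ := LinearEquiv.ofInjective ψ hψinj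
  set bL : Basis (Fin m) ℤ ↥Lsub := bsub.map e.symm with hbL
  have hfree : Module.Free ℤ ↥Lsub := Module.Free.of_basis bL
  have hfinite : Module.Finite ℤ ↥Lsub := Module.Finite.of_basis bL
  have hrankm : finrank ℤ ↥Lsub = m := by
    rw [finrank_eq_card_basis bL, Fintype.card_fin]
  have hVd : finrank ℝ V = Fintype.card ↥sset := finrank_eq_card_basis b
  -- m ≤ card sset
  have hm_le : m ≤ Fintype.card ↥sset := by
    have li := (bsub.linearIndependent).map' (LinearMap.range ψ).subtype
      (Submodule.ker_subtype _)
    have := li.fintype_card_le_finrank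
    rwa [Fintype.card_fin, finrank_pi ℤ] at this
  -- card sset ≤ m
  set vv : ↥sset → ↥Lsub := fun i => ⟨i.1, hsubL i.1 (hsubR i.2)⟩ with hvv
  have hle_m : Fintype.card ↥sset ≤ m := by
    have liZV : LinearIndependent ℤ (Subtype.val : ↥sset → V) := by
      refine hli.restrict_scalars ?_
      intro a b' hab
      simpa using hab
    have liZ : LinearIndependent ℤ vv := by
      refine LinearIndependent.of_comp Lsub.subtype.toIntLinearMap ?_
      convert liZV using 1
      exact funext fun i => rfl
    have := liZ.fintype_card_le_finrank
    rwa [hrankm] at this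
  have hrank : finrank ℤ ↥Lsub = finrank ℝ V := by
    rw [hrankm, hVd]
    exact le_antisymm hm_le hle_m
  -- the root system data
  set n : ↥Lsub → (↥Lsub →ₗ[ℤ] ℤ) :=
    fun r => if h : (r : V) ∈ R then nlin r.1 h else 0 with hn
  have hn_spec : ∀ r : ↥Lsub, (r : V) ∈ R → ∀ x : ↥Lsub, ((n r x : ℤ) : ℝ) = H (r : V) (x : V) := by
    intro r hr x
    rw [hn]
    simp only [dif_pos hr]
    exact hnlin_spec r.1 hr x
  set R' : Set ↥Lsub := {x : ↥Lsub | (x : V) ∈ R} with hR'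
  have hR'fin : R'.Finite :=
    hfin.preimage (Set.injOn_of_injective Subtype.val_injective)
  -- (R1)
  have hR1 : Submodule.span ℚ
      (⇑(TensorProduct.mk ℤ ℚ ↥Lsub 1) '' (R' ∪ {y : ↥Lsub | ∀ r ∈ R', n r y = 0})) = ⊤ := by
    set bQ : Basis (Fin m) ℚ (ℚ ⊗[ℤ] ↥Lsub) := bL.baseChange ℚ with hbQ
    have hQfin : Module.Finite ℚ (ℚ ⊗[ℤ] ↥Lsub) := Module.Finite.of_basis bQ
    have hQrank : finrank ℚ (ℚ ⊗[ℤ] ↥Lsub) = m := by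
      rw [finrank_eq_card_basis bQ, Fintype.card_fin]
    -- the base-changed integer embedding
    set castmap : (↥sset → ℤ) →ₗ[ℤ] (↥sset → ℚ) :=
      LinearMap.pi (fun i => (Int.castAddHom ℚ).toIntLinearMap ∘ₗ LinearMap.proj i) with hcast
    set Θ : (ℚ ⊗[ℤ] ↥Lsub) →ₗ[ℚ] (↥sset → ℚ) :=
      LinearMap.liftBaseChange ℚ (castmap ∘ₗ ψ) with hΘ
    set c : ↥sset → (↥sset → ℚ) := fun i j => ((nlin j.1 (hsubR j.2) (vv i) : ℤ) : ℚ) with hc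
    have hΘc : ∀ i : ↥sset, Θ ((TensorProduct.mk ℤ ℚ ↥Lsub 1) (vv i)) = c i := by
      intro i
      rw [hΘ]
      simp only [TensorProduct.mk_apply, LinearMap.liftBaseChange_tmul, one_smul,
        LinearMap.comp_apply]
      funext j
      simp [hcast, hψ, LinearMap.pi_apply]
      rfl
    -- ℚ-linear independence of the columns
    have lic : LinearIndependent ℚ c := by
      set J : (↥sset → ℚ) →ₗ[ℚ] (↥sset → ℝ) :=
        LinearMap.pi (fun j => (Algebra.linearMap ℚ ℝ) ∘ₗ LinearMap.proj j) with hJ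
      set ψr : V →ₗ[ℝ] (↥sset → ℝ) := LinearMap.pi (fun j : ↥sset => H j.1) with hψr
      have hψrinj : LinearMap.ker ψr = ⊥ := by
        rw [LinearMap.ker_eq_bot']
        intro x hx
        refine hcore x ?_
        intro t ht
        have := congrFun hx ⟨t, ht⟩
        simpa [hψr, LinearMap.pi_apply] using this
      have liw : LinearIndependent ℝ (⇑ψr ∘ (Subtype.val : ↥sset → V)) :=
        hli.map' ψr hψrinj
      have liwQ : LinearIndependent ℚ (⇑ψr ∘ (Subtype.val : ↥sset → V)) := by
        refine liw.restrict_scalars ?_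
        intro a b' hab
        have : ((a : ℝ)) = ((b' : ℝ)) := by simpa using hab
        exact_mod_cast this
      refine LinearIndependent.of_comp J ?_
      have hJc : ⇑J ∘ c = ⇑ψr ∘ (Subtype.val : ↥sset → V) := by
        funext i
        funext j
        simp only [Function.comp_apply, hJ, LinearMap.pi_apply, LinearMap.comp_apply,
          LinearMap.proj_apply, Algebra.linearMap_apply, hψr, hc]
        rw [map_intCast]
        exact hnlin_spec j.1 (hsubR j.2) (vv i)
      rw [hJc]
      exact liwQ
    -- span comparison
    set T : Submodule ℚ (ℚ ⊗[ℤ] ↥Lsub) :=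
      Submodule.span ℚ (⇑(TensorProduct.mk ℤ ℚ ↥Lsub 1) '' R') with hT
    have hT_top : T = ⊤ := by
      have hsub1 : Submodule.span ℚ (Set.range c) ≤ Submodule.map Θ T := by
        rw [Submodule.span_le]
        rintro - ⟨i, rfl⟩
        refine ⟨(TensorProduct.mk ℤ ℚ ↥Lsub 1) (vv i), ?_, hΘc i⟩
        exact Submodule.subset_span (Set.mem_image_of_mem _ (hsubR i.2))
      have h1 : Fintype.card ↥sset
          = finrank ℚ (Submodule.span ℚ (Set.range c)) := (finrank_span_eq_card lic).symm
      have h2 : finrank ℚ (Submodule.span ℚ (Set.range c)) ≤ finrank ℚ (Submodule.map Θ T) :=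
        Submodule.finrank_mono hsub1
      have h3 : finrank ℚ (Submodule.map Θ T) ≤ finrank ℚ T := Submodule.finrank_map_le Θ T
      have h4 : finrank ℚ T = finrank ℚ (ℚ ⊗[ℤ] ↥Lsub) := by
        refine le_antisymm (Submodule.finrank_le T) ?_
        rw [hQrank]
        calc m = Fintype.card ↥sset := le_antisymm hm_le hle_m
          _ ≤ finrank ℚ T := by omega
      exact Submodule.eq_top_of_finrank_eq h4
    rw [eq_top_iff, ← hT_top]
    exact Submodule.span_mono (Set.image_mono Set.subset_union_left)
  -- assemble
  refine ⟨hfree, hfinite, hrank, hsubL, n, hn_spec, ⟨hR'fin, hR1, ?_, ?_, ?_⟩, ?_⟩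
  · -- (R2)
    intro r hr
    have h1 := hn_spec r hr r
    rw [hHrr r.1 hr] at h1
    exact_mod_cast h1
  · -- (R3)
    intro r hr k hk
    have hcoe : ((k • r : ↥Lsub) : V) = (k : ℝ) • (r : V) := by
      push_cast
      rw [Int.cast_smul_eq_zsmul]
    have hk' : (k : ℝ) • (r : V) ∈ R := by rw [← hcoe]; exact hk
    have hr0 : (r : V) ≠ 0 := hRne r.1 hr
    rcases hred r.1 hr _ hk' (k : ℝ) rfl with h | h
    · left
      have h2 : ((k : ℝ) - 1) • (r : V) = 0 := by
        rw [sub_smul, one_smul, h, sub_self]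
      rcases smul_eq_zero.mp h2 with h3 | h3
      · have : (k : ℝ) = 1 := by linarith [sub_eq_zero.mp h3]
        exact_mod_cast this
      · exact absurd h3 hr0
    · right
      have h2 : ((k : ℝ) + 1) • (r : V) = 0 := by
        rw [add_smul, one_smul, h, neg_add_cancel]
      rcases smul_eq_zero.mp h2 with h3 | h3
      · have : (k : ℝ) = -1 := by linarith [h3]
        exact_mod_cast this
      · exact absurd h3 hr0
  · -- (R4)
    intro r hr t ht
    show ((t + n r t • r : ↥Lsub) : V) ∈ R
    have hcoe : ((t + n r t • r : ↥Lsub) : V) = (t : V) + ((n r t : ℤ) : ℝ) • (r : V) := by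
      push_cast
      rw [Int.cast_smul_eq_zsmul]
    rw [hcoe, hn_spec r hr t, ← hH r.1 hr (t : V)]
    exact (hperm r.1 hr) ▸ Set.mem_image_of_mem _ ht
  · -- semisimplicity
    rw [eq_bot_iff]
    intro x hx
    simp only [Submodule.mem_iInf, LinearMap.mem_ker] at hx
    have hx' : ∀ t ∈ sset, H t x.1 = 0 := by
      intro t ht
      have hmem : ((vv ⟨t, ht⟩ : ↥Lsub) : V) ∈ R := hsubR ht
      have h1 := hn_spec (vv ⟨t, ht⟩) hmem x
      rw [hx (vv ⟨t, ht⟩) hmem] at h1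
      simpa using h1.symm
    rw [Submodule.mem_bot]
    exact Subtype.ext (hcore x.1 hx')
end

section
/- Let (W, S) be a Coxeter system, let ω = (i₁, …, i_m) be a reduced word, and let s be a simple reflection (s ∈ S). Suppose that π(ω) is a reflection in W, that π(ω) commutes with s, and that π(ω) ≠ s. Then s does not occur in the sequence of reflections associated to ω; that is, s ≠ σ_k for all 1 ≤ k ≤ m. -/
namespace Stmt11Aux

open List CoxeterSystem

variable {I : Type*} {M : CoxeterMatrix I} {W : Type*} [Group W] (cs : CoxeterSystem M W)

open scoped Classical

set_option linter.unusedSectionVars false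

/-! ### Parity counting function -/

/-- The parity (in `ZMod 2`) of the number of occurrences of `w` in a list. -/
noncomputable def par (w : W) : List W → ZMod 2
  | [] => 0
  | a :: l => (if a = w then 1 else 0) + par w l

theorem zmod2_add_self (x : ZMod 2) : x + x = 0 := by
  rw [← two_mul, show (2 : ZMod 2) = 0 by decide, zero_mul]

@[simp] theorem par_nil (w : W) : par w [] = 0 := rfl

theorem par_cons (w a : W) (l : List W) :
    par w (a :: l) = (if a = w then 1 else 0) + par w l := by
  rw [par]

theorem par_append (w : W) (l₁ l₂ : List W) :
    par w (l₁ ++ l₂) = par w l₁ + par w l₂ := by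
  induction l₁ with
  | nil => simp
  | cons a l ih => rw [cons_append, par_cons, par_cons, ih, add_assoc]

theorem par_reverse (w : W) (l : List W) : par w l.reverse = par w l := by
  induction l with
  | nil => simp
  | cons a l ih =>
      rw [reverse_cons, par_append, par_cons, ih, par_cons, par_nil, add_zero, add_comm]

theorem par_map_conj (w c : W) (l : List W) :
    par w (l.map (fun x => c * x * c⁻¹)) = par (c⁻¹ * w * c) l := by
  induction l with
  | nil => simp
  | cons a l ih =>
      rw [map_cons, par_cons, par_cons, ih]
      congr 1
      refine if_congr ?_ rfl rfl
      constructor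
      · rintro rfl; group
      · rintro rfl; group

theorem par_eq_zero_of_not_mem {w : W} {l : List W} (h : w ∉ l) : par w l = 0 := by
  induction l with
  | nil => simp
  | cons a l ih =>
      rw [par_cons, if_neg (by rintro rfl; exact h mem_cons_self),
        ih (fun hm => h (mem_cons_of_mem a hm)), add_zero]

theorem par_eq_one_of_nodup_of_mem {w : W} {l : List W} (hnd : l.Nodup) (h : w ∈ l) :
    par w l = 1 := by
  induction l with
  | nil => simp at h
  | cons a l ih =>
      rw [par_cons]
      rcases List.mem_cons.mp h with rfl | hm
      · rw [if_pos rfl, par_eq_zero_of_not_mem (List.nodup_cons.mp hnd).1, add_zero]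
      · rw [if_neg (by rintro rfl; exact (List.nodup_cons.mp hnd).1 hm),
          ih (List.nodup_cons.mp hnd).2 hm, zero_add]

/-! ### Basic inversion sequence lemmas -/

theorem ris_cons (c : I) (ω : List I) :
    cs.rightInvSeq (c :: ω) =
      ((cs.wordProd ω)⁻¹ * cs.simple c * cs.wordProd ω) :: cs.rightInvSeq ω := rfl

theorem rightInvSeq_append' (A B : List I) :
    cs.rightInvSeq (A ++ B) =
      (cs.rightInvSeq A).map (fun x => (cs.wordProd B)⁻¹ * x * cs.wordProd B)
        ++ cs.rightInvSeq B := by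
  induction A with
  | nil => simp
  | cons a A ih =>
      rw [cons_append, ris_cons, ris_cons, ih, map_cons, cons_append]
      congr 1
      rw [cs.wordProd_append]
      group

theorem lis_eq_map_conj_ris (ω : List I) :
    cs.leftInvSeq ω =
      (cs.rightInvSeq ω).map (fun x => cs.wordProd ω * x * (cs.wordProd ω)⁻¹) := by
  induction ω with
  | nil => simp
  | cons a ω ih =>
      rw [leftInvSeq, ris_cons, map_cons, ih, map_map, cs.wordProd_cons]
      congr 1
      · group
      · refine List.map_congr_left (fun x hx => ?_)
        simp only [Function.comp_apply, MulAut.conj_apply]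
        group

/-! ### The sign representation -/

/-- The underlying function of the sign permutation attached to a simple reflection. -/
noncomputable def etaFun (i : I) : W × ZMod 2 → W × ZMod 2 :=
  fun p => (cs.simple i * p.1 * cs.simple i, p.2 + if p.1 = cs.simple i then 1 else 0)

theorem etaFun_involutive (i : I) : Function.Involutive (etaFun cs i) := by
  rintro ⟨w, ε⟩
  simp only [etaFun]
  have h1 : cs.simple i * (cs.simple i * w * cs.simple i) * cs.simple i = w := by
    rw [← mul_assoc, ← mul_assoc, cs.simple_mul_simple_self, one_mul, mul_assoc,
      cs.simple_mul_simple_self, mul_one]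
  have h2 : (cs.simple i * w * cs.simple i = cs.simple i) ↔ (w = cs.simple i) := by
    constructor
    · intro h
      have := congrArg (fun x => (cs.simple i)⁻¹ * x * (cs.simple i)⁻¹) h
      simpa [mul_assoc] using this
    · rintro rfl; rw [cs.simple_mul_simple_self, one_mul]
  refine Prod.ext h1 ?_
  simp only [h2]
  by_cases h : w = cs.simple i
  · rw [if_pos h, add_assoc, zmod2_add_self, add_zero]
  · rw [if_neg h, add_zero, add_zero]

/-- The sign permutation attached to a simple reflection. -/
noncomputable def eta (i : I) : Equiv.Perm (W × ZMod 2) :=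
  (etaFun_involutive cs i).toPerm

theorem eta_apply (i : I) (w : W) (ε : ZMod 2) :
    eta cs i (w, ε) =
      (cs.simple i * w * cs.simple i, ε + if w = cs.simple i then 1 else 0) := rfl

/-- Key formula: the product of the sign permutations along a word acts by conjugation
in the first component, and in the second component adds the parity of the number of
occurrences in the right inversion sequence. -/
theorem prod_map_eta (ω : List I) (w : W) (ε : ZMod 2) :
    ((ω.map (eta cs)).prod) (w, ε) =
      (cs.wordProd ω * w * (cs.wordProd ω)⁻¹, ε + par w (cs.rightInvSeq ω)) := by
  induction ω generalizing ε with
  | nil => simp [par]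
  | cons l ω ih =>
      rw [map_cons, prod_cons, Equiv.Perm.mul_apply, ih, eta_apply, ris_cons, par_cons,
        cs.wordProd_cons]
      have hiff : (cs.wordProd ω * w * (cs.wordProd ω)⁻¹ = cs.simple l)
          ↔ ((cs.wordProd ω)⁻¹ * cs.simple l * cs.wordProd ω = w) := by
        constructor
        · intro h; rw [← h]; group
        · intro h; rw [← h]; group
      refine Prod.ext ?_ ?_
      · show cs.simple l * (cs.wordProd ω * w * (cs.wordProd ω)⁻¹) * cs.simple l
          = cs.simple l * cs.wordProd ω * w * (cs.simple l * cs.wordProd ω)⁻¹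
        rw [mul_inv_rev, cs.inv_simple]
        group
      · show ε + par w (cs.rightInvSeq ω)
            + (if cs.wordProd ω * w * (cs.wordProd ω)⁻¹ = cs.simple l then 1 else 0) = _
        rw [if_congr hiff rfl rfl]
        ring

/-! ### The braid relations for `eta` -/

section Braid

variable (i j : I)

/-- The sequence of "dihedral" reflections attached to the pair `(i,j)`. -/
noncomputable def rseq (n : ℕ) : W :=
  (cs.wordProd (alternatingWord i j n))⁻¹ * cs.wordProd (alternatingWord i j (n + 1))

theorem simple_mul_pow (k : ℕ) :
    cs.simple j * (cs.simple i * cs.simple j) ^ k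
      = ((cs.simple i * cs.simple j) ^ k)⁻¹ * cs.simple j := by
  induction k with
  | zero => simp
  | succ k ih =>
      have base : cs.simple j * (cs.simple i * cs.simple j)
          = (cs.simple i * cs.simple j)⁻¹ * cs.simple j := by
        rw [mul_inv_rev, cs.inv_simple, cs.inv_simple, mul_assoc]
      rw [pow_succ, ← mul_assoc, ih, mul_assoc, base, ← mul_assoc, ← mul_inv_rev, ← pow_succ', pow_succ]

theorem rseq_eq (q : ℕ) :
    rseq cs i j q = ((cs.simple i * cs.simple j) ^ q)⁻¹ * cs.simple j := by
  rcases Nat.even_or_odd q with ⟨u, hu⟩ | ⟨u, hu⟩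
  · have hq : q = 2 * u := by omega
    subst hq
    have h1 : Even (2 * u) := even_two_mul u
    have h2 : ¬ Even (2 * u + 1) := by simp [Nat.even_add_one, h1]
    have h3 : (2 * u) / 2 = u := by omega
    have h4 : (2 * u + 1) / 2 = u := by omega
    rw [rseq, cs.prod_alternatingWord_eq_mul_pow, cs.prod_alternatingWord_eq_mul_pow,
      if_pos h1, if_neg h2, h3, h4, one_mul, simple_mul_pow, two_mul, pow_add, mul_inv_rev,
      mul_assoc]
  · have hq : q = 2 * u + 1 := by omega
    subst hq
    have h1 : ¬ Even (2 * u + 1) := by simp [Nat.even_add_one, even_two_mul u]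
    have h2 : Even (2 * u + 1 + 1) := by simpa [Nat.even_add_one] using h1
    have h3 : (2 * u + 1) / 2 = u := by omega
    have h4 : (2 * u + 1 + 1) / 2 = u + 1 := by omega
    rw [rseq, cs.prod_alternatingWord_eq_mul_pow, cs.prod_alternatingWord_eq_mul_pow,
      if_neg h1, if_pos h2, h3, h4, one_mul, mul_inv_rev, cs.inv_simple, mul_assoc,
      simple_mul_pow, ← mul_assoc, ← mul_inv_rev, ← pow_add]
    have huu : u + 1 + u = 2 * u + 1 := by omega
    rw [huu]

theorem rseq_add_period (n : ℕ) :
    rseq cs i j (n + M i j) = rseq cs i j n := by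
  have ham : (cs.simple i * cs.simple j) ^ M i j = 1 := cs.simple_mul_simple_pow i j
  rw [rseq_eq, rseq_eq, pow_add, ham, mul_one]

theorem ris_alternatingWord (N : ℕ) :
    cs.rightInvSeq (alternatingWord i j N) = ((List.range N).reverse).map (rseq cs i j) := by
  induction N with
  | zero => simp [alternatingWord]
  | succ N ih =>
      rw [alternatingWord_succ', ris_cons, ih, List.range_succ, List.reverse_append,
        List.reverse_singleton, List.singleton_append, map_cons]
      congr 1
      have hπ : cs.wordProd (alternatingWord i j (N + 1))
          = cs.simple (if Even N then j else i) * cs.wordProd (alternatingWord i j N) := by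
        rw [alternatingWord_succ', cs.wordProd_cons]
      have : cs.simple (if Even N then j else i)
          = cs.wordProd (alternatingWord i j (N + 1)) * (cs.wordProd (alternatingWord i j N))⁻¹ := by
        rw [hπ]; group
      rw [this, rseq]
      group

theorem par_ris_alternatingWord_even (w : W) :
    par w (cs.rightInvSeq (alternatingWord i j (2 * M i j))) = 0 := by
  rw [ris_alternatingWord, List.map_reverse, par_reverse, two_mul, List.range_add,
    map_append, par_append, map_map]
  have : ((List.range (M i j)).map ((rseq cs i j) ∘ (fun k => M i j + k)))
      = (List.range (M i j)).map (rseq cs i j) := by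
    refine List.map_congr_left (fun x hx => ?_)
    simp only [Function.comp_apply]
    rw [add_comm, rseq_add_period]
  rw [this, zmod2_add_self]

theorem map_eta_alternatingWord_prod (n : ℕ) :
    ((alternatingWord i j (2 * n)).map (eta cs)).prod = (eta cs i * eta cs j) ^ n := by
  induction n with
  | zero => simp [alternatingWord]
  | succ n ih =>
      have h2 : 2 * (n + 1) = (2 * n + 1) + 1 := by omega
      rw [h2, alternatingWord_succ, alternatingWord_succ]
      rw [List.concat_eq_append, List.concat_eq_append, append_assoc, map_append, prod_append,
        ih, map_append, map_cons, map_nil, map_cons, map_nil, pow_succ]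
      simp [mul_assoc]

theorem eta_liftable : M.IsLiftable (eta cs) := by
  intro i j
  have hword : ((alternatingWord i j (2 * M i j)).map (eta cs)).prod
      = (eta cs i * eta cs j) ^ M i j := map_eta_alternatingWord_prod cs i j (M i j)
  rw [← hword]
  refine Equiv.ext fun p => ?_
  obtain ⟨w, ε⟩ := p
  rw [prod_map_eta]
  have hπ : cs.wordProd (alternatingWord i j (2 * M i j)) = 1 := by
    rw [cs.prod_alternatingWord_eq_mul_pow, if_pos (even_two_mul _),
      Nat.mul_div_cancel_left _ (by norm_num : 0 < 2), one_mul, cs.simple_mul_simple_pow]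
  rw [hπ, par_ris_alternatingWord_even]
  simp

end Braid

/-- The sign representation `W →* Perm (W × ZMod 2)`. -/
noncomputable def rho : W →* Equiv.Perm (W × ZMod 2) :=
  cs.lift ⟨eta cs, eta_liftable cs⟩

theorem rho_wordProd (ω : List I) : rho cs (cs.wordProd ω) = (ω.map (eta cs)).prod := by
  induction ω with
  | nil => rw [cs.wordProd_nil, map_one, map_nil, prod_nil]
  | cons a ω ih =>
      rw [cs.wordProd_cons, map_mul, ih, map_cons, prod_cons, rho, cs.lift_apply_simple]

end Stmt11Aux

open Stmt11Aux List

/-- if `ω` is a reduced word, `s` a simple reflection, and `π(ω)` a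
reflection which commutes with `s` and is distinct from `s`, then `s` does not occur in
the sequence of reflections associated to `ω`. -/
theorem stmt11 {I : Type*} {M : CoxeterMatrix I} {W : Type*} [Group W]
    (cs : CoxeterSystem M W) (ω : List I) (hred : cs.IsReduced ω)
    (i : I) (hrefl : cs.IsReflection (cs.wordProd ω))
    (hcomm : Commute (cs.wordProd ω) (cs.simple i))
    (hne : cs.wordProd ω ≠ cs.simple i) :
    cs.simple i ∉ cs.leftInvSeq ω := by
  intro hmem
  classical
  -- `s i` also belongs to the right inversion sequence of `ω`
  have hfix : (cs.wordProd ω)⁻¹ * cs.simple i * cs.wordProd ω = cs.simple i := by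
    rw [mul_assoc, ← hcomm.eq, ← mul_assoc, inv_mul_cancel, one_mul]
  have hmem' : cs.simple i ∈ cs.rightInvSeq ω := by
    rw [lis_eq_map_conj_ris] at hmem
    obtain ⟨x, hx, hxe⟩ := List.mem_map.mp hmem
    have hxval : x = (cs.wordProd ω)⁻¹ * cs.simple i * cs.wordProd ω := by
      rw [← hxe]; group
    rwa [hxval, hfix] at hx
  have hpar1 : par (cs.simple i) (cs.rightInvSeq ω) = 1 :=
    par_eq_one_of_nodup_of_mem hred.nodup_rightInvSeq hmem'
  -- the reflection gives another word for `π ω`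
  obtain ⟨u, j, htuj⟩ := hrefl
  obtain ⟨χ, hχ⟩ := cs.wordProd_surjective u
  set ω' : List I := χ ++ ([j] ++ χ.reverse) with hω'
  have hπω' : cs.wordProd ω' = cs.wordProd ω := by
    rw [hω', cs.wordProd_append, cs.wordProd_append, cs.wordProd_singleton,
      cs.wordProd_reverse, hχ, htuj, mul_assoc]
  -- the parity of occurrences of `s i` in the right inversion sequence of `ω'` is zero
  have key2 : cs.simple j * (u⁻¹ * cs.simple i * u)
      = (u⁻¹ * cs.simple i * u) * cs.simple j := by
    have h : (u * cs.simple j * u⁻¹) * cs.simple i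
        = cs.simple i * (u * cs.simple j * u⁻¹) := by
      rw [← htuj]; exact hcomm.eq
    calc cs.simple j * (u⁻¹ * cs.simple i * u)
        = u⁻¹ * ((u * cs.simple j * u⁻¹) * cs.simple i) * u := by group
      _ = u⁻¹ * (cs.simple i * (u * cs.simple j * u⁻¹)) * u := by rw [h]
      _ = (u⁻¹ * cs.simple i * u) * cs.simple j := by group
  have hpar0 : par (cs.simple i) (cs.rightInvSeq ω') = 0 := by
    rw [hω', rightInvSeq_append', rightInvSeq_append', par_append, par_append]
    -- middle term
    have hmid : par (cs.simple i)
        ((cs.rightInvSeq [j]).map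
          (fun x => (cs.wordProd χ.reverse)⁻¹ * x * cs.wordProd χ.reverse)) = 0 := by
      rw [cs.rightInvSeq_singleton, map_cons, map_nil, par_cons, par_nil]
      rw [if_neg, add_zero]
      intro hcontra
      apply hne
      rw [htuj, ← hχ, ← cs.wordProd_reverse, ← hcontra, cs.wordProd_reverse, hχ]
      group
    -- last term
    have hlast : par (cs.simple i) (cs.rightInvSeq χ.reverse)
        = par (u⁻¹ * cs.simple i * u) (cs.rightInvSeq χ) := by
      rw [cs.rightInvSeq_reverse, par_reverse, lis_eq_map_conj_ris]
      have := par_map_conj (cs.simple i) (cs.wordProd χ) (cs.rightInvSeq χ)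
      rw [this, hχ]
    -- first term
    have hfirst : par (cs.simple i)
        ((cs.rightInvSeq χ).map
          (fun x => (cs.wordProd ([j] ++ χ.reverse))⁻¹ * x * cs.wordProd ([j] ++ χ.reverse)))
        = par (u⁻¹ * cs.simple i * u) (cs.rightInvSeq χ) := by
      set c : W := (cs.wordProd ([j] ++ χ.reverse))⁻¹ with hc
      have hfun : (fun x : W => c * x * cs.wordProd ([j] ++ χ.reverse))
          = (fun x : W => c * x * c⁻¹) := by
        funext x; rw [hc, inv_inv]
      rw [hfun, par_map_conj]
      congr 1
      rw [hc, inv_inv, cs.wordProd_append, cs.wordProd_singleton, cs.wordProd_reverse, hχ]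
      calc (cs.simple j * u⁻¹) * cs.simple i * (cs.simple j * u⁻¹)⁻¹
          = cs.simple j * (u⁻¹ * cs.simple i * u) * (cs.simple j)⁻¹ := by group
        _ = ((u⁻¹ * cs.simple i * u) * cs.simple j) * (cs.simple j)⁻¹ := by rw [key2]
        _ = u⁻¹ * cs.simple i * u := by group
    rw [hmid, hlast, hfirst, zero_add, zmod2_add_self]
  -- compare the two computations of `rho (π ω)` at `(s i, 0)`
  have e1 := prod_map_eta cs ω (cs.simple i) 0
  have e2 := prod_map_eta cs ω' (cs.simple i) 0
  have hρ : ((ω.map (eta cs)).prod) = ((ω'.map (eta cs)).prod) := by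
    rw [← rho_wordProd, ← rho_wordProd, hπω']
  rw [hρ, e2, hπω'] at e1
  have := congrArg Prod.snd e1
  simp only [hpar0, hpar1] at this
  norm_num at this
end

section
/- Let (W, S) be a Coxeter system with set of reflections Σ, let ℤ[Σ] be the free abelian group on Σ with W acting by permuting basis elements via conjugation (w·e_σ = e_{wσw⁻¹}), and form the semidirect product ℤ[Σ] ⋊ W. Let τ(W) be the subgroup of ℤ[Σ] ⋊ W generated by the elements (e_s, s) for s ∈ S (the Tits extension). Then the projection τ(W) → W is surjective, and its kernel — the intersection of τ(W) with ℤ[Σ] × {1} — is exactly the subgroup 2·ℤ[Σ]. -/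
variable {I : Type*} {M : CoxeterMatrix I} {W : Type*} [Group W]

/-- Conjugation by `w` permutes the set `Σ` of reflections of a Coxeter system. -/
def conjReflEquiv (cs : CoxeterSystem M W) (w : W) :
    {t : W // cs.IsReflection t} ≃ {t : W // cs.IsReflection t} where
  toFun σ := ⟨w * σ.1 * w⁻¹, σ.2.conj w⟩
  invFun σ := ⟨w⁻¹ * σ.1 * w, by simpa using σ.2.conj w⁻¹⟩
  left_inv σ := Subtype.ext (by group)
  right_inv σ := Subtype.ext (by group)

/-- The action of `W` on the free abelian group `ℤ[Σ]` on the set `Σ` of reflections,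
permuting the basis via conjugation (`w·e_σ = e_{wσw⁻¹}`). -/
noncomputable def titsAction (cs : CoxeterSystem M W) :
    W →* MulAut (Multiplicative ({t : W // cs.IsReflection t} →₀ ℤ)) where
  toFun w := AddEquiv.toMultiplicative (Finsupp.domCongr (conjReflEquiv cs w))
  map_one' := by
    refine MulEquiv.ext fun f => ?_
    show Finsupp.equivMapDomain (conjReflEquiv cs 1) f.toAdd = f.toAdd
    have : conjReflEquiv cs 1 = Equiv.refl _ := by
      ext σ
      simp [conjReflEquiv]
    rw [this, Finsupp.equivMapDomain_refl]
  map_mul' w w' := by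
    refine MulEquiv.ext fun f => ?_
    show Finsupp.equivMapDomain (conjReflEquiv cs (w * w')) f.toAdd
        = Finsupp.equivMapDomain (conjReflEquiv cs w)
            (Finsupp.equivMapDomain (conjReflEquiv cs w') f.toAdd)
    rw [← Finsupp.equivMapDomain_trans]
    congr 1
    ext σ
    simp [conjReflEquiv, mul_assoc]

/-- The semidirect product `ℤ[Σ] ⋊ W`. -/
abbrev TitsSDP (cs : CoxeterSystem M W) :=
  SemidirectProduct (Multiplicative ({t : W // cs.IsReflection t} →₀ ℤ)) W (titsAction cs)

/-- The generator `a_i = (e_{s_i}, s_i)` of the Tits extension inside `ℤ[Σ] ⋊ W`. -/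
noncomputable def titsGen (cs : CoxeterSystem M W) (i : I) : TitsSDP cs :=
  ⟨Multiplicative.ofAdd
      (Finsupp.single (⟨cs.simple i, cs.isReflection_simple i⟩ :
        {t : W // cs.IsReflection t}) (1 : ℤ)),
    cs.simple i⟩

/-- The Tits extension `τ(W)`: the subgroup of `ℤ[Σ] ⋊ W` generated by the elements
`(e_s, s)` for `s` a simple reflection. -/
noncomputable def titsExtension (cs : CoxeterSystem M W) : Subgroup (TitsSDP cs) :=
  Subgroup.closure (Set.range (titsGen cs))
open SemidirectProduct Multiplicative Finsupp

section Aux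
variable (cs : CoxeterSystem M W)

/-- mod-2 version of the Tits action. -/
noncomputable def titsAction2 :
    W →* MulAut (Multiplicative ({t : W // cs.IsReflection t} →₀ ZMod 2)) where
  toFun w := AddEquiv.toMultiplicative (Finsupp.domCongr (conjReflEquiv cs w))
  map_one' := by
    refine MulEquiv.ext fun f => ?_
    show Finsupp.equivMapDomain (conjReflEquiv cs 1) f.toAdd = f.toAdd
    have : conjReflEquiv cs 1 = Equiv.refl _ := by
      ext σ; simp [conjReflEquiv]
    rw [this, Finsupp.equivMapDomain_refl]
  map_mul' w w' := by
    refine MulEquiv.ext fun f => ?_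
    show Finsupp.equivMapDomain (conjReflEquiv cs (w * w')) f.toAdd
        = Finsupp.equivMapDomain (conjReflEquiv cs w)
            (Finsupp.equivMapDomain (conjReflEquiv cs w') f.toAdd)
    rw [← Finsupp.equivMapDomain_trans]
    congr 1
    ext σ
    simp [conjReflEquiv, mul_assoc]

abbrev SDP2 :=
  SemidirectProduct (Multiplicative ({t : W // cs.IsReflection t} →₀ ZMod 2)) W (titsAction2 cs)

noncomputable def titsGen2 (i : I) : SDP2 cs :=
  ⟨Multiplicative.ofAdd
      (Finsupp.single (⟨cs.simple i, cs.isReflection_simple i⟩ :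
        {t : W // cs.IsReflection t}) (1 : ZMod 2)),
    cs.simple i⟩

lemma titsAction_apply (w : W) (x) :
    Multiplicative.toAdd (titsAction cs w x)
      = Finsupp.equivMapDomain (conjReflEquiv cs w) (Multiplicative.toAdd x) := rfl

lemma titsAction2_apply (w : W) (x) :
    Multiplicative.toAdd (titsAction2 cs w x)
      = Finsupp.equivMapDomain (conjReflEquiv cs w) (Multiplicative.toAdd x) := rfl

lemma titsAction_single (w : W) (σ : {t : W // cs.IsReflection t}) (n : ℤ) :
    titsAction cs w (ofAdd (Finsupp.single σ n))
      = ofAdd (Finsupp.single (⟨w * σ.1 * w⁻¹, σ.2.conj w⟩ :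
          {t : W // cs.IsReflection t}) n) := by
  apply Multiplicative.toAdd.injective
  rw [titsAction_apply]
  simp [Finsupp.equivMapDomain_single, conjReflEquiv]

lemma titsAction2_single (w : W) (σ : {t : W // cs.IsReflection t}) (n : ZMod 2) :
    titsAction2 cs w (ofAdd (Finsupp.single σ n))
      = ofAdd (Finsupp.single (⟨w * σ.1 * w⁻¹, σ.2.conj w⟩ :
          {t : W // cs.IsReflection t}) n) := by
  apply Multiplicative.toAdd.injective
  rw [titsAction2_apply]
  simp [Finsupp.equivMapDomain_single, conjReflEquiv]

end Aux

section Dihedral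
variable (cs : CoxeterSystem M W) (i j : I)

local notation "c" => cs.simple i * cs.simple j

lemma key_comm : ∀ r : ℤ, cs.simple i * c ^ r = c ^ (-r) * cs.simple i := by
  intro r
  have h1 : cs.simple i * c * (cs.simple i)⁻¹ = c ^ (-1 : ℤ) := by
    rw [cs.inv_simple, zpow_neg, zpow_one]
    rw [mul_inv_rev]
    rw [cs.inv_simple, cs.inv_simple]
    rw [← mul_assoc, cs.simple_mul_simple_self, one_mul]
  have h2 : cs.simple i * c ^ r * (cs.simple i)⁻¹ = c ^ (-r) := by
    calc cs.simple i * c ^ r * (cs.simple i)⁻¹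
        = (MulAut.conj (cs.simple i)) (c ^ r) := rfl
      _ = ((MulAut.conj (cs.simple i)) c) ^ r := by rw [map_zpow]
      _ = (c ^ (-1 : ℤ)) ^ r := by rw [MulAut.conj_apply, h1]
      _ = c ^ (-r) := by rw [← zpow_mul]; ring_nf
  calc cs.simple i * c ^ r = cs.simple i * c ^ r * (cs.simple i)⁻¹ * cs.simple i := by group
    _ = c ^ (-r) * cs.simple i := by rw [h2]

lemma conj_T (k r : ℤ) :
    c ^ k * (cs.simple i * c ^ r) * (c ^ k)⁻¹ = cs.simple i * c ^ (r - 2 * k) := by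
  have : c ^ k * cs.simple i = cs.simple i * c ^ (-k) := by
    have := key_comm cs i j (-k)
    rw [neg_neg] at this
    rw [← this]
  rw [← mul_assoc, this]
  rw [mul_assoc, mul_assoc, ← zpow_neg, ← zpow_add, ← zpow_add]
  ring_nf

lemma T_isRefl : ∀ r : ℤ, cs.IsReflection (cs.simple i * c ^ r) := by
  intro r
  rcases Int.even_or_odd r with ⟨q, hq⟩ | ⟨q, hq⟩
  · have : cs.simple i * c ^ r = c ^ (-q) * cs.simple i * (c ^ (-q))⁻¹ := by
      rw [hq, zpow_add, ← mul_assoc, key_comm cs i j q, zpow_neg]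
      group
    rw [this]
    exact (cs.isReflection_simple i).conj _
  · have : cs.simple i * c ^ r = c ^ (-q) * cs.simple j * (c ^ (-q))⁻¹ := by
      rw [hq]
      have e1 : (2 * q + 1 : ℤ) = q + 1 + q := by ring
      rw [e1, zpow_add, zpow_add, ← mul_assoc, ← mul_assoc, key_comm cs i j q, zpow_one]
      rw [zpow_neg, inv_inv]
      congr 1
      rw [mul_assoc, ← mul_assoc (cs.simple i) (cs.simple i), cs.simple_mul_simple_self, one_mul]
    rw [this]
    exact (cs.isReflection_simple j).conj _

end Dihedral

section Dihedral2
variable (cs : CoxeterSystem M W) (i j : I)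

local notation "c" => cs.simple i * cs.simple j

/-- The basis elements appearing in powers of `titsGen2 i * titsGen2 j`. -/
noncomputable def Egen (r : ℕ) : {t : W // cs.IsReflection t} →₀ ZMod 2 :=
  Finsupp.single ⟨cs.simple i * c ^ (-(r : ℤ)), T_isRefl cs i j _⟩ 1

lemma action_Egen (m r : ℕ) :
    titsAction2 cs (c ^ m) (ofAdd (Egen cs i j r)) = ofAdd (Egen cs i j (r + 2 * m)) := by
  rw [Egen, Egen, titsAction2_single]
  congr 1
  apply congrArg (fun t => Finsupp.single t (1 : ZMod 2))
  apply Subtype.ext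
  show c ^ m * (cs.simple i * c ^ (-(r : ℤ))) * (c ^ m)⁻¹ = cs.simple i * c ^ (-((r + 2 * m : ℕ) : ℤ))
  have h := conj_T cs i j (m : ℤ) (-(r : ℤ))
  rw [zpow_natCast] at h
  rw [h]
  congr 1
  push_cast
  ring_nf

lemma gen2_mul :
    titsGen2 cs i * titsGen2 cs j = ⟨ofAdd (Egen cs i j 0 + Egen cs i j 1), c⟩ := by
  refine SemidirectProduct.ext ?_ rfl
  rw [SemidirectProduct.mul_left]
  show ofAdd (Finsupp.single (⟨cs.simple i, cs.isReflection_simple i⟩ :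
      {t : W // cs.IsReflection t}) (1 : ZMod 2)) * titsAction2 cs (cs.simple i)
      (ofAdd (Finsupp.single (⟨cs.simple j, cs.isReflection_simple j⟩ :
        {t : W // cs.IsReflection t}) (1 : ZMod 2))) = _
  rw [titsAction2_single, ofAdd_add]
  congr 2
  · apply congrArg (fun t => Finsupp.single t (1 : ZMod 2))
    apply Subtype.ext
    show cs.simple i = cs.simple i * c ^ (-(0 : ℕ) : ℤ)
    simp
  · apply congrArg (fun t => Finsupp.single t (1 : ZMod 2))
    apply Subtype.ext
    show cs.simple i * cs.simple j * (cs.simple i)⁻¹ = cs.simple i * c ^ (-(1 : ℕ) : ℤ)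
    rw [cs.inv_simple]
    have : c ^ (-(1 : ℕ) : ℤ) = cs.simple j * cs.simple i := by
      simp [mul_inv_rev, cs.inv_simple]
    rw [this, ← mul_assoc]

lemma pow_formula (m : ℕ) :
    (titsGen2 cs i * titsGen2 cs j) ^ m =
      ⟨ofAdd (∑ r ∈ Finset.range (2 * m), Egen cs i j r), c ^ m⟩ := by
  induction m with
  | zero =>
    refine (SemidirectProduct.ext ?_ ?_).symm <;> simp
  | succ m ih =>
    rw [pow_succ, ih, gen2_mul]
    refine SemidirectProduct.ext ?_ ?_
    · rw [SemidirectProduct.mul_left]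
      show ofAdd (∑ r ∈ Finset.range (2 * m), Egen cs i j r) * titsAction2 cs (c ^ m)
          (ofAdd (Egen cs i j 0 + Egen cs i j 1)) = ofAdd (∑ r ∈ Finset.range (2 * (m + 1)), Egen cs i j r)
      rw [ofAdd_add, map_mul, action_Egen, action_Egen, ← ofAdd_add, ← ofAdd_add]
      congr 1
      have h2 : 2 * (m + 1) = 2 * m + 1 + 1 := by ring
      rw [h2, Finset.sum_range_succ, Finset.sum_range_succ]
      have h0 : 0 + 2 * m = 2 * m := by omega
      have h1 : 1 + 2 * m = 2 * m + 1 := by omega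
      rw [h0, h1, add_assoc]
    · show c ^ m * c = c ^ (m + 1)
      rw [pow_succ]

end Dihedral2

section Lift2
variable (cs : CoxeterSystem M W)

lemma liftable2 : CoxeterMatrix.IsLiftable M (titsGen2 cs) := by
  intro i j
  rw [pow_formula]
  have hc : (cs.simple i * cs.simple j) ^ M i j = 1 := cs.simple_mul_simple_pow i j
  refine SemidirectProduct.ext ?_ hc
  show ofAdd (∑ r ∈ Finset.range (2 * M i j), Egen cs i j r) = 1
  have hE : ∀ r : ℕ, Egen cs i j (M i j + r) = Egen cs i j r := by
    intro r
    rw [Egen, Egen]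
    apply congrArg (fun t => Finsupp.single t (1 : ZMod 2))
    apply Subtype.ext
    show cs.simple i * (cs.simple i * cs.simple j) ^ (-((M i j + r : ℕ) : ℤ))
        = cs.simple i * (cs.simple i * cs.simple j) ^ (-(r : ℤ))
    congr 1
    have : (-((M i j + r : ℕ) : ℤ)) = (-(M i j : ℤ)) + (-(r : ℤ)) := by push_cast; ring
    rw [this, zpow_add]
    have : (cs.simple i * cs.simple j) ^ (-(M i j : ℤ)) = 1 := by
      rw [zpow_neg, zpow_natCast, hc, inv_one]
    rw [this, one_mul]
  have : ∑ r ∈ Finset.range (2 * M i j), Egen cs i j r = 0 := by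
    rw [two_mul, Finset.sum_range_add]
    simp only [hE]
    ext σ
    rw [Finsupp.add_apply, Finsupp.coe_zero, Pi.zero_apply]
    exact CharTwo.add_self_eq_zero _
  rw [this, ofAdd_zero]

end Lift2

section Red
variable (cs : CoxeterSystem M W)

/-- Reduction mod 2, `ℤ[Σ] ⋊ W → (ℤ/2)[Σ] ⋊ W`. -/
noncomputable def red : TitsSDP cs →* SDP2 cs where
  toFun x := ⟨ofAdd (Finsupp.mapRange (Int.cast : ℤ → ZMod 2) (by simp) (toAdd x.left)), x.right⟩
  map_one' := by
    refine SemidirectProduct.ext ?_ rfl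
    show ofAdd (Finsupp.mapRange _ _ (toAdd (1 : Multiplicative _))) = 1
    rw [toAdd_one]
    simp
  map_mul' x y := by
    refine SemidirectProduct.ext ?_ rfl
    show ofAdd (Finsupp.mapRange _ _ (toAdd (x * y).left))
        = ofAdd (Finsupp.mapRange _ _ (toAdd x.left))
          * titsAction2 cs x.right (ofAdd (Finsupp.mapRange _ _ (toAdd y.left)))
    rw [SemidirectProduct.mul_left]
    apply toAdd.injective
    simp only [toAdd_ofAdd, toAdd_mul, titsAction2_apply, titsAction_apply]
    ext σ
    simp [Finsupp.mapRange_apply, Finsupp.equivMapDomain_apply]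

lemma red_titsGen (i : I) : red cs (titsGen cs i) = titsGen2 cs i := by
  refine SemidirectProduct.ext ?_ rfl
  show ofAdd (Finsupp.mapRange (Int.cast : ℤ → ZMod 2) _
      (toAdd (Multiplicative.ofAdd (Finsupp.single _ (1 : ℤ))))) = _
  rw [toAdd_ofAdd, Finsupp.mapRange_single]
  norm_num
  rfl

/-- The splitting `W → (ℤ/2)[Σ] ⋊ W` (the mod-2 reflection cocycle). -/
noncomputable def psi2 : W →* SDP2 cs := CoxeterSystem.lift cs ⟨titsGen2 cs, liftable2 cs⟩

lemma psi2_simple (i : I) : psi2 cs (cs.simple i) = titsGen2 cs i :=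
  cs.lift_apply_simple (liftable2 cs) i

lemma red_eq_psi2 {x : TitsSDP cs} (hx : x ∈ titsExtension cs) :
    red cs x = psi2 cs (SemidirectProduct.rightHom x) := by
  induction hx using Subgroup.closure_induction with
  | mem y hy =>
    obtain ⟨i, rfl⟩ := hy
    rw [red_titsGen]
    have : SemidirectProduct.rightHom (titsGen cs i) = cs.simple i := rfl
    rw [this, psi2_simple]
  | one => simp
  | mul y z hy hz ihy ihz => rw [map_mul, map_mul, map_mul, ihy, ihz]
  | inv y hy ihy => rw [map_inv, map_inv, map_inv, ihy]

lemma surj_aux (w : W) : ∃ x ∈ titsExtension cs, SemidirectProduct.rightHom x = w := by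
  obtain ⟨ω, rfl⟩ := cs.wordProd_surjective w
  refine ⟨(ω.map (titsGen cs)).prod, ?_, ?_⟩
  · exact Subgroup.list_prod_mem _ (by
      intro x hx
      obtain ⟨i, _, rfl⟩ := List.mem_map.mp hx
      exact Subgroup.subset_closure ⟨i, rfl⟩)
  · rw [map_list_prod, List.map_map]
    rfl

lemma conj_inl (x : TitsSDP cs) (n : Multiplicative ({t : W // cs.IsReflection t} →₀ ℤ)) :
    x * SemidirectProduct.inl n * x⁻¹
      = SemidirectProduct.inl (titsAction cs x.right n) := by
  refine SemidirectProduct.ext ?_ ?_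
  · rw [SemidirectProduct.mul_left, SemidirectProduct.mul_left, SemidirectProduct.inv_left,
      SemidirectProduct.mul_right, SemidirectProduct.left_inl, SemidirectProduct.right_inl,
      mul_one, SemidirectProduct.left_inl]
    rw [← MulAut.mul_apply, ← map_mul, mul_inv_cancel, map_one, MulAut.one_apply,
      mul_comm x.left, mul_assoc, mul_inv_cancel, mul_one]
  · simp

end Red

section Main
variable (cs : CoxeterSystem M W)

lemma titsGen_sq (i : I) :
    titsGen cs i ^ 2 = SemidirectProduct.inl (ofAdd ((2 : ℤ) • Finsupp.single
      (⟨cs.simple i, cs.isReflection_simple i⟩ : {t : W // cs.IsReflection t}) (1 : ℤ))) := by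
  rw [pow_two]
  refine SemidirectProduct.ext ?_ ?_
  · rw [SemidirectProduct.mul_left, SemidirectProduct.left_inl]
    show ofAdd (Finsupp.single (⟨cs.simple i, cs.isReflection_simple i⟩ :
        {t : W // cs.IsReflection t}) (1 : ℤ)) * titsAction cs (cs.simple i)
        (ofAdd (Finsupp.single (⟨cs.simple i, cs.isReflection_simple i⟩ :
          {t : W // cs.IsReflection t}) (1 : ℤ))) = _
    rw [titsAction_single, ← ofAdd_add]
    congr 1
    have h : (⟨cs.simple i * cs.simple i * (cs.simple i)⁻¹,
        (cs.isReflection_simple i).conj _⟩ : {t : W // cs.IsReflection t})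
        = ⟨cs.simple i, cs.isReflection_simple i⟩ := Subtype.ext (by group)
    rw [h, two_smul]
  · show cs.simple i * cs.simple i = 1
    exact cs.simple_mul_simple_self i

lemma two_single_mem (σ : {t : W // cs.IsReflection t}) :
    SemidirectProduct.inl (ofAdd ((2 : ℤ) • Finsupp.single σ (1 : ℤ)))
      ∈ titsExtension cs := by
  obtain ⟨w, i, hσ⟩ := σ.2
  obtain ⟨x, hx, hxw⟩ := surj_aux cs w
  have hgen : titsGen cs i ∈ titsExtension cs := Subgroup.subset_closure ⟨i, rfl⟩
  have hmem : x * titsGen cs i ^ 2 * x⁻¹ ∈ titsExtension cs :=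
    mul_mem (mul_mem hx (pow_mem hgen 2)) (inv_mem hx)
  rw [titsGen_sq, conj_inl] at hmem
  convert hmem using 2
  have h2 : (2 : ℤ) • Finsupp.single
      (⟨cs.simple i, cs.isReflection_simple i⟩ : {t : W // cs.IsReflection t}) (1 : ℤ)
      = Finsupp.single (⟨cs.simple i, cs.isReflection_simple i⟩ :
        {t : W // cs.IsReflection t}) (2 : ℤ) := by
    rw [Finsupp.smul_single, smul_eq_mul, mul_one]
  have h1 : (2 : ℤ) • Finsupp.single σ (1 : ℤ) = Finsupp.single σ (2 : ℤ) := by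
    rw [Finsupp.smul_single, smul_eq_mul, mul_one]
  rw [h1, h2, titsAction_single]
  apply congrArg
  apply congrArg (fun t => Finsupp.single t (2 : ℤ))
  apply Subtype.ext
  show σ.1 = x.right * cs.simple i * x.right⁻¹
  have : x.right = w := hxw
  rw [this, ← hσ]

lemma two_smul_mem (g : {t : W // cs.IsReflection t} →₀ ℤ) :
    SemidirectProduct.inl (ofAdd ((2 : ℤ) • g)) ∈ titsExtension cs := by
  induction g using Finsupp.induction_linear with
  | zero => simpa using (titsExtension cs).one_mem
  | add f g hf hg =>
    rw [smul_add, ofAdd_add, map_mul]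
    exact mul_mem hf hg
  | single σ b =>
    have key := two_single_mem cs σ
    have heq : SemidirectProduct.inl (ofAdd ((2 : ℤ) • Finsupp.single σ b))
        = (SemidirectProduct.inl (ofAdd ((2 : ℤ) • Finsupp.single σ (1 : ℤ))) :
            TitsSDP cs) ^ b := by
      rw [← map_zpow, ← ofAdd_zsmul]
      apply congrArg
      apply congrArg
      rw [smul_smul, Finsupp.smul_single, Finsupp.smul_single, smul_eq_mul, smul_eq_mul,
        mul_one, mul_comm]
    rw [heq]
    exact zpow_mem key b

end Main

/-- the projection `τ(W) → W` is surjective, and its kernel — the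
intersection of `τ(W)` with `ℤ[Σ] × {1}` — is exactly `2·ℤ[Σ]`. -/
theorem stmt14 (cs : CoxeterSystem M W) :
    (∀ w : W, ∃ x ∈ titsExtension cs, SemidirectProduct.rightHom x = w) ∧
    (∀ x : TitsSDP cs,
      (x ∈ titsExtension cs ∧ SemidirectProduct.rightHom x = 1) ↔
      ∃ g : {t : W // cs.IsReflection t} →₀ ℤ,
        x = SemidirectProduct.inl (Multiplicative.ofAdd ((2 : ℤ) • g))) := by
  refine ⟨surj_aux cs, fun x => ⟨?_, ?_⟩⟩
  · rintro ⟨hx, hx1⟩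
    have hred := red_eq_psi2 cs hx
    rw [hx1, map_one] at hred
    have h1 : ofAdd (Finsupp.mapRange (Int.cast : ℤ → ZMod 2) (by simp) (toAdd x.left)) = 1 := by
      have := congrArg SemidirectProduct.left hred
      exact this
    have h0 : Finsupp.mapRange (Int.cast : ℤ → ZMod 2) (by simp) (toAdd x.left) = 0 := by
      have := congrArg toAdd h1
      simpa using this
    have hdvd : ∀ σ, (2 : ℤ) ∣ toAdd x.left σ := by
      intro σ
      have := congrArg (fun f => f σ) h0
      simp only [Finsupp.mapRange_apply, Finsupp.coe_zero, Pi.zero_apply] at this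
      have h := (ZMod.intCast_zmod_eq_zero_iff_dvd (toAdd x.left σ) 2).mp this
      exact_mod_cast h
    refine ⟨(toAdd x.left).mapRange (· / 2) (by norm_num), ?_⟩
    refine (SemidirectProduct.ext ?_ ?_).symm
    · rw [SemidirectProduct.left_inl]
      apply toAdd.injective
      rw [toAdd_ofAdd]
      ext σ
      simp only [Finsupp.smul_apply, Finsupp.mapRange_apply, smul_eq_mul]
      exact Int.mul_ediv_cancel' (hdvd σ)
    · rw [SemidirectProduct.right_inl]
      exact hx1.symm
  · rintro ⟨g, rfl⟩
    exact ⟨two_smul_mem cs g, SemidirectProduct.rightHom_inl _⟩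
end

section
/- Let ℤ₂ be the ring of 2-adic integers, L a finitely generated free ℤ₂-module, and σ a reflection on L. Then ker(1+σ) and im(1−σ) are free ℤ₂-modules of rank 1, with inclusions 2·ker(1+σ) ⊆ im(1−σ) ⊆ ker(1+σ), and 2·ker(1+σ) = im(1−σ) if and only if σ is trivial mod 2. Consequently, for b₀ a generator of ker(1+σ): if σ is trivial mod 2 then σ has exactly two markings, represented by strict markings with first components b₀ and 2·b₀, and if σ is nontrivial mod 2 then σ has exactly one marking, represented by a strict marking with first component b₀. -/
/-- A strict marking for a reflection `σ` on a complete lattice over `ℤ₂`: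
a pair `(b, β)` with `σ(x) = x + β(x)·b` for all `x`. -/
def IsStrictMarkingP {L : Type*} [AddCommGroup L] [Module ℤ_[2] L]
    (σ : L →ₗ[ℤ_[2]] L) (p : L × (L →ₗ[ℤ_[2]] ℤ_[2])) : Prop :=
  ∀ x : L, σ x = x + p.2 x • p.1

/-- The equivalence relation on strict markings over `ℤ₂`:
`(b′, β′) = (u·b, u⁻¹·β)` for a unit `u` of `ℤ₂`.  Markings are its classes. -/
def MarkingRelP {L : Type*} [AddCommGroup L] [Module ℤ_[2] L] (σ : L →ₗ[ℤ_[2]] L)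
    (p q : {p : L × (L →ₗ[ℤ_[2]] ℤ_[2]) // IsStrictMarkingP σ p}) : Prop :=
  ∃ u : ℤ_[2]ˣ, q.val.1 = (u : ℤ_[2]) • p.val.1 ∧
    q.val.2 = ((u⁻¹ : ℤ_[2]ˣ) : ℤ_[2]) • p.val.2

section Aux
variable {L : Type*} [AddCommGroup L] [Module ℤ_[2] L] [Module.Free ℤ_[2] L]

lemma two_nonunit : ¬ IsUnit (2 : ℤ_[2]) := by
  have := (PadicInt.prime_p (p := 2)).not_unit; simpa using this

lemma two_nz : (2 : ℤ_[2]) ≠ 0 := by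
  have := (PadicInt.prime_p (p := 2)).ne_zero; simpa using this

noncomputable def betaFor (σ : L →ₗ[ℤ_[2]] L) (b : L) (hb : b ≠ 0)
    (h : ∀ x : L, σ x - x ∈ Submodule.span ℤ_[2] {b}) : L →ₗ[ℤ_[2]] ℤ_[2] :=
  (LinearEquiv.toSpanNonzeroSingleton ℤ_[2] L b hb).symm.toLinearMap ∘ₗ
    LinearMap.codRestrict (Submodule.span ℤ_[2] {b}) (σ - LinearMap.id)
      (by intro x; simpa using h x)

lemma betaFor_spec (σ : L →ₗ[ℤ_[2]] L) (b : L) (hb : b ≠ 0)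
    (h : ∀ x : L, σ x - x ∈ Submodule.span ℤ_[2] {b}) (x : L) :
    betaFor σ b hb h x • b = σ x - x := by
  set e := LinearEquiv.toSpanNonzeroSingleton ℤ_[2] L b hb with he
  have h1 : (e (betaFor σ b hb h x) : L) = σ x - x := by
    simp [betaFor, ← he, LinearMap.codRestrict_apply]
  rw [← h1]
  simp [he, LinearEquiv.toSpanNonzeroSingleton]

lemma betaFor_marking (σ : L →ₗ[ℤ_[2]] L) (b : L) (hb : b ≠ 0)
    (h : ∀ x : L, σ x - x ∈ Submodule.span ℤ_[2] {b}) :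
    IsStrictMarkingP σ (b, betaFor σ b hb h) := by
  intro x
  have := betaFor_spec σ b hb h x
  simp only at this ⊢
  rw [this]; abel

lemma markingRel_of (σ : L →ₗ[ℤ_[2]] L)
    (p q : {p : L × (L →ₗ[ℤ_[2]] ℤ_[2]) // IsStrictMarkingP σ p})
    (hb : p.val.1 ≠ 0) (u : ℤ_[2]ˣ) (h : q.val.1 = (u : ℤ_[2]) • p.val.1) :
    MarkingRelP σ p q := by
  refine ⟨u, h, ?_⟩
  ext x
  have h1 := p.2 x
  have h2 := q.2 x
  rw [h1, h] at h2
  have h3 : p.val.2 x • p.val.1 = (q.val.2 x * u) • p.val.1 := by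
    rw [mul_smul]; exact add_left_cancel h2
  have h4 : p.val.2 x = q.val.2 x * u := smul_left_injective ℤ_[2] hb h3
  simp only [LinearMap.smul_apply, smul_eq_mul]
  rw [h4, mul_comm (q.val.2 x) _, ← mul_assoc, Units.inv_mul, one_mul]

end Aux

/-- for a reflection `σ` on a finitely generated free `ℤ₂`-module `L`,
`ker(1+σ)` and `im(1−σ)` are free of rank 1 with `2·ker(1+σ) ⊆ im(1−σ) ⊆ ker(1+σ)`,
with equality on the left iff `σ` is trivial mod 2; consequently, for a generator `b₀`
of `ker(1+σ)`, `σ` has exactly two markings (represented by `b₀` and `2·b₀`) if `σ` is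
trivial mod 2, and exactly one marking (represented by `b₀`) otherwise. -/
theorem stmt15 (L : Type*) [AddCommGroup L] [Module ℤ_[2] L]
    [Module.Free ℤ_[2] L] [Module.Finite ℤ_[2] L]
    (σ : L →ₗ[ℤ_[2]] L) (hinv : σ ∘ₗ σ = LinearMap.id)
    (hrank : Module.finrank ℤ_[2] (LinearMap.ker (LinearMap.id + σ)) = 1) :
    (∃ b : L, b ≠ 0 ∧ LinearMap.ker (LinearMap.id + σ) = Submodule.span ℤ_[2] {b}) ∧
    (∃ c : L, c ≠ 0 ∧ LinearMap.range (LinearMap.id - σ) = Submodule.span ℤ_[2] {c}) ∧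
    Submodule.map ((2 : ℤ_[2]) • (LinearMap.id : L →ₗ[ℤ_[2]] L))
        (LinearMap.ker (LinearMap.id + σ)) ≤ LinearMap.range (LinearMap.id - σ) ∧
    LinearMap.range (LinearMap.id - σ) ≤ LinearMap.ker (LinearMap.id + σ) ∧
    (Submodule.map ((2 : ℤ_[2]) • (LinearMap.id : L →ₗ[ℤ_[2]] L))
        (LinearMap.ker (LinearMap.id + σ)) = LinearMap.range (LinearMap.id - σ) ↔
      ∀ x : L, ∃ y : L, σ x - x = (2 : ℤ_[2]) • y) ∧
    (∀ b₀ : L, LinearMap.ker (LinearMap.id + σ) = Submodule.span ℤ_[2] {b₀} →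
      ((∀ x : L, ∃ y : L, σ x - x = (2 : ℤ_[2]) • y) →
        ∃ p q : {p : L × (L →ₗ[ℤ_[2]] ℤ_[2]) // IsStrictMarkingP σ p},
          p.val.1 = b₀ ∧ q.val.1 = (2 : ℤ_[2]) • b₀ ∧
          Quot.mk (MarkingRelP σ) p ≠ Quot.mk (MarkingRelP σ) q ∧
          ∀ m : Quot (MarkingRelP σ),
            m = Quot.mk (MarkingRelP σ) p ∨ m = Quot.mk (MarkingRelP σ) q) ∧
      ((¬ ∀ x : L, ∃ y : L, σ x - x = (2 : ℤ_[2]) • y) →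
        ∃ p : {p : L × (L →ₗ[ℤ_[2]] ℤ_[2]) // IsStrictMarkingP σ p},
          p.val.1 = b₀ ∧
          ∀ m : Quot (MarkingRelP σ), m = Quot.mk (MarkingRelP σ) p)) := by
  have hσσ : ∀ x : L, σ (σ x) = x := by
    intro x; have := LinearMap.ext_iff.mp hinv x; simpa using this
  set K := LinearMap.ker (LinearMap.id + σ) with hKdef
  set R := LinearMap.range (LinearMap.id - σ) with hRdef
  have hmemK : ∀ x : L, x ∈ K ↔ x + σ x = 0 := by
    intro x
    simp [hKdef, LinearMap.mem_ker]
  have hRK : R ≤ K := by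
    rintro y ⟨x, rfl⟩
    rw [LinearMap.sub_apply, LinearMap.id_apply, hmemK]
    rw [map_sub, hσσ x]
    abel
  have h2K : Submodule.map ((2 : ℤ_[2]) • (LinearMap.id : L →ₗ[ℤ_[2]] L)) K ≤ R := by
    rintro y ⟨k, hk, rfl⟩
    have hk' : σ k = -k := by
      have := (hmemK k).mp hk
      exact eq_neg_of_add_eq_zero_left (by rw [add_comm]; exact this)
    refine ⟨k, ?_⟩
    rw [LinearMap.sub_apply, LinearMap.id_apply, hk', LinearMap.smul_apply, LinearMap.id_apply,
      sub_neg_eq_add, two_smul]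
  -- part 1 : generator of K
  obtain ⟨bK⟩ : Nonempty (Module.Basis (Fin 1) ℤ_[2] K) := ⟨Module.finBasisOfFinrankEq ℤ_[2] K hrank⟩
  set b : L := (bK 0 : L) with hbdef
  have hbne : b ≠ 0 := by
    simpa [hbdef] using bK.ne_zero 0
  have hKspan : K = Submodule.span ℤ_[2] {b} := by
    have h1 : Set.range bK = {bK 0} := Set.range_unique
    have h2 := bK.span_eq
    rw [h1] at h2
    have h3 : K = Submodule.map K.subtype (Submodule.span ℤ_[2] {bK 0}) := by
      rw [h2, Submodule.map_subtype_top]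
    rw [h3, Submodule.map_span, Set.image_singleton]
    rfl
  have hbK : b ∈ K := by rw [hKspan]; exact Submodule.mem_span_singleton_self b
  have hσb : σ b = -b := by
    have := (hmemK b).mp hbK
    exact eq_neg_of_add_eq_zero_left (by rw [add_comm]; exact this)
  have h2bR : (2 : ℤ_[2]) • b ∈ R := by
    refine ⟨b, ?_⟩
    rw [LinearMap.sub_apply, LinearMap.id_apply, hσb, sub_neg_eq_add, two_smul]
  have h2bne : (2 : ℤ_[2]) • b ≠ 0 := smul_ne_zero two_nz hbne
  -- part 2 : generator of R
  set φ := LinearMap.toSpanSingleton ℤ_[2] L b with hφdef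
  have hRle : R ≤ LinearMap.range φ := by
    rw [hφdef, ← LinearMap.span_singleton_eq_range, ← hKspan]
    exact hRK
  obtain ⟨s, hs⟩ : ∃ s, Submodule.comap φ R = Ideal.span {s} :=
    ⟨_, (Submodule.IsPrincipal.span_singleton_generator _).symm⟩
  have hRspan : R = Submodule.span ℤ_[2] {s • b} := by
    have h1 : R = Submodule.map φ (Submodule.comap φ R) :=
      (Submodule.map_comap_eq_self hRle).symm
    rw [hs] at h1
    rw [h1, Ideal.span, Submodule.map_span, Set.image_singleton, hφdef,
      LinearMap.toSpanSingleton_apply]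
  have hcne : s • b ≠ 0 := by
    intro h0
    rw [h0, Submodule.span_zero_singleton] at hRspan
    have : (2 : ℤ_[2]) • b = 0 := by
      have := hRspan ▸ h2bR
      simpa using this
    exact h2bne this
  -- the iff
  have hiff : Submodule.map ((2 : ℤ_[2]) • (LinearMap.id : L →ₗ[ℤ_[2]] L)) K = R ↔
      ∀ x : L, ∃ y : L, σ x - x = (2 : ℤ_[2]) • y := by
    constructor
    · intro hEq x
      have hx : (LinearMap.id - σ : L →ₗ[ℤ_[2]] L) x ∈ R := ⟨x, rfl⟩
      rw [← hEq] at hx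
      obtain ⟨k, hk, hk2⟩ := hx
      refine ⟨-k, ?_⟩
      have h5 : (2 : ℤ_[2]) • k = x - σ x := by
        simpa [LinearMap.smul_apply] using hk2
      rw [smul_neg, h5]; abel
    · intro h
      refine le_antisymm h2K ?_
      rintro y ⟨x, rfl⟩
      obtain ⟨y₀, hy₀⟩ := h x
      have hyK : y₀ ∈ K := by
        have h1 : (σ x - x) + σ (σ x - x) = 0 := by
          rw [map_sub, hσσ x]; abel
        rw [hy₀] at h1
        have h2 : (2 : ℤ_[2]) • (y₀ + σ y₀) = 0 := by
          rw [smul_add, ← map_smul]; exact h1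
        have h3 := (smul_eq_zero.mp h2).resolve_left two_nz
        exact (hmemK y₀).mpr h3
      refine ⟨-y₀, Submodule.neg_mem _ hyK, ?_⟩
      rw [LinearMap.smul_apply, LinearMap.id_apply, LinearMap.sub_apply, LinearMap.id_apply,
        smul_neg, hy₀.symm]
      abel
  refine ⟨⟨b, hbne, hKspan⟩, ⟨s • b, hcne, hRspan⟩, h2K, hRK, hiff, ?_⟩
  -- markings
  intro b₀ hK0
  have hb₀ : b₀ ≠ 0 := by
    rintro rfl
    rw [Submodule.span_zero_singleton] at hK0
    rw [hK0] at hrank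
    simp at hrank
  have hb₀K : b₀ ∈ K := by rw [hK0]; exact Submodule.mem_span_singleton_self b₀
  have hσb₀ : σ b₀ = -b₀ := by
    have := (hmemK b₀).mp hb₀K
    exact eq_neg_of_add_eq_zero_left (by rw [add_comm]; exact this)
  have hmem0 : ∀ x : L, σ x - x ∈ Submodule.span ℤ_[2] {b₀} := by
    intro x
    have h1 : (LinearMap.id - σ : L →ₗ[ℤ_[2]] L) x ∈ Submodule.span ℤ_[2] {b₀} := by
      rw [← hK0]; exact hRK ⟨x, rfl⟩
    have h2 := Submodule.neg_mem _ h1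
    simpa [LinearMap.sub_apply, neg_sub] using h2
  set p0 : {p : L × (L →ₗ[ℤ_[2]] ℤ_[2]) // IsStrictMarkingP σ p} :=
    ⟨(b₀, betaFor σ b₀ hb₀ hmem0), betaFor_marking σ b₀ hb₀ hmem0⟩ with hp0
  have hn2 : (-2 : ℤ_[2]) ≠ 0 := neg_ne_zero.mpr two_nz
  -- classification of strict markings
  have hclass : ∀ r : {p : L × (L →ₗ[ℤ_[2]] ℤ_[2]) // IsStrictMarkingP σ p},
      (∃ u : ℤ_[2]ˣ, r.val.1 = (u : ℤ_[2]) • b₀) ∨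
      ((∃ u : ℤ_[2]ˣ, r.val.1 = (u : ℤ_[2]) • ((2 : ℤ_[2]) • b₀)) ∧
        ∀ x : L, ∃ y : L, σ x - x = (2 : ℤ_[2]) • y) := by
    rintro ⟨⟨b', β'⟩, hr⟩
    have key : β' b₀ • b' = (-2 : ℤ_[2]) • b₀ := by
      have h1 := hr b₀
      rw [hσb₀] at h1
      have h2 : β' b₀ • b' = -b₀ - b₀ :=
        eq_sub_of_add_eq (by rw [add_comm]; exact h1.symm)
      rw [h2, neg_smul, two_smul]; abel
    have hβ'b₀ : β' b₀ ≠ 0 := by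
      intro h0; rw [h0, zero_smul] at key
      exact smul_ne_zero hn2 hb₀ key.symm
    have hb'ne : b' ≠ 0 := by
      intro h0; rw [h0, smul_zero] at key
      exact smul_ne_zero hn2 hb₀ key.symm
    have hb'K : b' ∈ K := by
      have h1 : β' b₀ • (b' + σ b') = 0 := by
        have h2 : (β' b₀ • b') + σ (β' b₀ • b') = 0 := by
          rw [key, map_smul, hσb₀, smul_neg]; abel
        rw [smul_add, ← map_smul]; exact h2
      have h3 := (smul_eq_zero.mp h1).resolve_left hβ'b₀
      exact (hmemK b').mpr h3
    rw [hK0] at hb'K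
    obtain ⟨t, ht⟩ := Submodule.mem_span_singleton.mp hb'K
    have htne : t ≠ 0 := by
      rintro rfl; rw [zero_smul] at ht; exact hb'ne ht.symm
    have htmul : β' b₀ * t = -2 := by
      rw [← ht, smul_smul] at key
      exact smul_left_injective ℤ_[2] hb₀ key
    by_cases hu : IsUnit t
    · left
      obtain ⟨u, rfl⟩ := hu
      exact ⟨u, ht.symm⟩
    · right
      have hmem : t ∈ IsLocalRing.maximalIdeal ℤ_[2] := by
        rw [IsLocalRing.mem_maximalIdeal]
        exact hu
      rw [PadicInt.maximalIdeal_eq_span_p] at hmem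
      obtain ⟨w, hw⟩ := Ideal.mem_span_singleton.mp hmem
      have hw2 : t = 2 * w := by
        rw [hw]; norm_num
      have hwβ : w * β' b₀ = -1 := by
        have h1 : (2 : ℤ_[2]) * (w * β' b₀) = 2 * (-1) := by
          rw [← mul_assoc]
          calc (2 : ℤ_[2]) * w * β' b₀ = β' b₀ * t := by rw [hw2]; ring
            _ = -2 := htmul
            _ = 2 * (-1) := by ring
        exact mul_left_cancel₀ two_nz h1
      have hwu : IsUnit w := IsUnit.of_mul_eq_one (a := w) (-(β' b₀))
        (by rw [mul_neg, hwβ, neg_neg])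
      refine ⟨⟨hwu.unit, ?_⟩, ?_⟩
      · rw [hwu.unit_spec, smul_smul, mul_comm w 2, ← hw2, ht]
      · intro x
        refine ⟨(β' x * w) • b₀, ?_⟩
        have h1 := hr x
        have h2 : σ x - x = β' x • b' := sub_eq_of_eq_add' h1
        rw [h2, ← ht, hw2, smul_smul, smul_smul]
        congr 1; ring
  constructor
  · -- trivial mod 2 case: two markings
    intro htriv
    have h2b₀ : (2 : ℤ_[2]) • b₀ ≠ 0 := smul_ne_zero two_nz hb₀
    have hmem2 : ∀ x : L, σ x - x ∈ Submodule.span ℤ_[2] {(2 : ℤ_[2]) • b₀} := by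
      intro x
      obtain ⟨y, hy⟩ := htriv x
      have hyK : y ∈ K := by
        have h1 : (σ x - x) + σ (σ x - x) = 0 := by rw [map_sub, hσσ x]; abel
        rw [hy] at h1
        have h2 : (2 : ℤ_[2]) • (y + σ y) = 0 := by rw [smul_add, ← map_smul]; exact h1
        exact (hmemK y).mpr ((smul_eq_zero.mp h2).resolve_left two_nz)
      rw [hK0] at hyK
      obtain ⟨a, ha⟩ := Submodule.mem_span_singleton.mp hyK
      rw [Submodule.mem_span_singleton]
      refine ⟨a, ?_⟩
      rw [smul_smul, hy, ← ha, smul_smul]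
      congr 1; ring
    set q0 : {p : L × (L →ₗ[ℤ_[2]] ℤ_[2]) // IsStrictMarkingP σ p} :=
      ⟨((2 : ℤ_[2]) • b₀, betaFor σ _ h2b₀ hmem2), betaFor_marking σ _ h2b₀ hmem2⟩ with hq0
    refine ⟨p0, q0, rfl, rfl, ?_, ?_⟩
    · intro hEq
      have hinvr : ∀ (r s : {p : L × (L →ₗ[ℤ_[2]] ℤ_[2]) // IsStrictMarkingP σ p}),
          MarkingRelP σ r s →
          (r.val.1 ∈ Submodule.span ℤ_[2] {(2 : ℤ_[2]) • b₀}) =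
            (s.val.1 ∈ Submodule.span ℤ_[2] {(2 : ℤ_[2]) • b₀}) := by
        rintro r s ⟨u, hu1, -⟩
        apply propext
        rw [hu1]
        constructor
        · exact fun h => Submodule.smul_mem _ _ h
        · intro h
          have h2 := Submodule.smul_mem _ ((u⁻¹ : ℤ_[2]ˣ) : ℤ_[2]) h
          rwa [smul_smul, Units.inv_mul, one_smul] at h2
      have hF : (p0.val.1 ∈ Submodule.span ℤ_[2] {(2 : ℤ_[2]) • b₀}) =
          (q0.val.1 ∈ Submodule.span ℤ_[2] {(2 : ℤ_[2]) • b₀}) :=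
        congrArg (Quot.lift (fun r : {p : L × (L →ₗ[ℤ_[2]] ℤ_[2]) // IsStrictMarkingP σ p} =>
          r.val.1 ∈ Submodule.span ℤ_[2] {(2 : ℤ_[2]) • b₀}) hinvr) hEq
      have hb₀mem : b₀ ∈ Submodule.span ℤ_[2] {(2 : ℤ_[2]) • b₀} := by
        show p0.val.1 ∈ _
        rw [hF]
        exact Submodule.mem_span_singleton_self _
      obtain ⟨a, ha⟩ := Submodule.mem_span_singleton.mp hb₀mem
      rw [smul_smul] at ha
      have h1 : a * 2 = 1 := smul_left_injective ℤ_[2] hb₀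
        (show (a * 2) • b₀ = (1 : ℤ_[2]) • b₀ by rw [ha, one_smul])
      exact two_nonunit (IsUnit.of_mul_eq_one (a := 2) a (by rw [mul_comm]; exact h1))
    · intro m
      induction m using Quot.ind with | _ r => ?_
      rcases hclass r with ⟨u, hu⟩ | ⟨⟨u, hu⟩, -⟩
      · exact Or.inl (Quot.sound (markingRel_of σ p0 r hb₀ u hu)).symm
      · exact Or.inr (Quot.sound (markingRel_of σ q0 r h2b₀ u hu)).symm
  · -- nontrivial mod 2 case: one marking
    intro hnon
    refine ⟨p0, rfl, ?_⟩
    intro m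
    induction m using Quot.ind with | _ r => ?_
    rcases hclass r with ⟨u, hu⟩ | ⟨-, htriv⟩
    · exact (Quot.sound (markingRel_of σ p0 r hb₀ u hu)).symm
    · exact absurd htriv hnon
end

section
/- Let L be a lattice and W a finite subgroup of Aut(L) generated by the reflections it contains. Then the ℚ-vector space ℚ ⊗ L is spanned by the W-fixed subspace (ℚ ⊗ L)^W together with the lines ℚ ⊗ ker(1+σ), as σ ranges over the reflections contained in W. -/
open scoped TensorProduct

set_option linter.unusedSectionVars false
set_option maxHeartbeats 800000

section AuxS
variable {L : Type*} [AddCommGroup L] [Module.Free ℤ L] [Module.Finite ℤ L]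

lemma aux_tmul_eq_zero {x : L} (h : (1:ℚ) ⊗ₜ[ℤ] x = 0) : x = 0 := by
  classical
  let b := Module.Free.chooseBasis ℤ L
  let bQ := b.baseChange ℚ
  have h2 : ∀ i, bQ.repr ((1:ℚ) ⊗ₜ[ℤ] x) i = 0 := by rw [h]; simp
  apply b.repr.injective
  ext i
  have := h2 i
  rw [Module.Basis.baseChange_repr_tmul] at this
  simpa [zsmul_eq_mul] using this

lemma aux_tmul_inj {x y : L} (h : (1:ℚ) ⊗ₜ[ℤ] x = (1:ℚ) ⊗ₜ[ℤ] y) : x = y := by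
  have h0 : (1:ℚ) ⊗ₜ[ℤ] (x - y) = 0 := by
    rw [TensorProduct.tmul_sub, h, sub_self]
  exact sub_eq_zero.mp (aux_tmul_eq_zero h0)

lemma int_smul_one_tmul (m : ℤ) (a : L) :
    (m:ℚ) • ((1:ℚ) ⊗ₜ[ℤ] a) = (1:ℚ) ⊗ₜ[ℤ] (m • a) := by
  rw [TensorProduct.smul_tmul', smul_eq_mul, mul_one, ← TensorProduct.smul_tmul]
  norm_num

lemma aux_exists_den (v : ℚ ⊗[ℤ] L) :
    ∃ n : ℤ, 0 < n ∧ ∃ x : L, (n : ℚ) • v = (1:ℚ) ⊗ₜ[ℤ] x := by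
  induction v using TensorProduct.induction_on with
  | zero => exact ⟨1, one_pos, 0, by simp⟩
  | tmul q x =>
      refine ⟨(q.den : ℤ), by exact_mod_cast q.pos, q.num • x, ?_⟩
      rw [← int_smul_one_tmul, TensorProduct.smul_tmul', TensorProduct.smul_tmul',
        smul_eq_mul, smul_eq_mul, mul_one]
      congr 1
      push_cast
      rw [mul_comm]
      exact_mod_cast Rat.mul_den_eq_num q
  | add u w hu hw =>
      obtain ⟨n, hn, x, hx⟩ := hu
      obtain ⟨m, hm, y, hy⟩ := hw
      refine ⟨n * m, mul_pos hn hm, m • x + n • y, ?_⟩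
      rw [smul_add, TensorProduct.tmul_add, ← int_smul_one_tmul, ← int_smul_one_tmul,
        ← hx, ← hy, smul_smul, smul_smul]
      push_cast
      ring_nf

end AuxS

/-- A reflection on a lattice: an automorphism of order dividing 2 whose
`(−1)`-eigenlattice has rank 1. -/
def IsReflectionE {L : Type*} [AddCommGroup L] (σ : L ≃ₗ[ℤ] L) : Prop :=
  σ * σ = 1 ∧
    Module.finrank ℤ
      (LinearMap.ker ((LinearMap.id : L →ₗ[ℤ] L) + (σ : L →ₗ[ℤ] L))) = 1

section Aux2
variable {L : Type*} [AddCommGroup L]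

lemma conj_reflection {σ w : L ≃ₗ[ℤ] L} (h : IsReflectionE σ) :
    IsReflectionE (w * σ * w⁻¹) := by
  obtain ⟨h1, h2⟩ := h
  constructor
  · have e : (w * σ * w⁻¹) * (w * σ * w⁻¹) = w * (σ * σ) * w⁻¹ := by group
    rw [e, h1, mul_one, mul_inv_cancel]
  · rw [← h2]
    have hmap : (LinearMap.ker ((LinearMap.id : L →ₗ[ℤ] L) + (σ : L →ₗ[ℤ] L))).map
          (w : L →ₗ[ℤ] L)
        = LinearMap.ker ((LinearMap.id : L →ₗ[ℤ] L)
            + ((w * σ * w⁻¹ : L ≃ₗ[ℤ] L) : L →ₗ[ℤ] L)) := by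
      ext x
      rw [Submodule.mem_map_equiv]
      simp only [LinearMap.mem_ker, LinearMap.add_apply, LinearMap.id_apply,
        LinearEquiv.coe_coe]
      have happ : (w * σ * w⁻¹ : L ≃ₗ[ℤ] L) x = w (σ (w.symm x)) := rfl
      rw [happ]
      constructor
      · intro hh
        have := congrArg w hh
        simpa [map_add] using this
      · intro hh
        have := congrArg w.symm hh
        simpa [map_add] using this
    rw [← hmap]
    exact (LinearEquiv.finrank_eq ((w : L ≃ₗ[ℤ] L).submoduleMap _)).symm

end Aux2

/-- if `W` is a finite subgroup of `Aut(L)` generated by the reflections it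
contains, then `ℚ ⊗ L` is spanned by the `W`-fixed subspace together with the lines
`ℚ ⊗ ker(1+σ)` for `σ` a reflection in `W`. -/
theorem stmt19 (L : Type*) [AddCommGroup L] [Module.Free ℤ L] [Module.Finite ℤ L]
    (W : Subgroup (L ≃ₗ[ℤ] L)) (hWfin : (W : Set (L ≃ₗ[ℤ] L)).Finite)
    (hgen : Subgroup.closure {σ : L ≃ₗ[ℤ] L | σ ∈ W ∧ IsReflectionE σ} = W) :
    Submodule.span ℚ
      ({v : ℚ ⊗[ℤ] L | ∀ w ∈ W,
          LinearMap.baseChange ℚ ((w : L ≃ₗ[ℤ] L) : L →ₗ[ℤ] L) v = v} ∪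
        ⋃ σ ∈ {σ : L ≃ₗ[ℤ] L | σ ∈ W ∧ IsReflectionE σ},
          ⇑(TensorProduct.mk ℤ ℚ L 1) '' {x : L | σ x = -x}) = ⊤ := by
  classical
  set S : Set (L ≃ₗ[ℤ] L) := {σ : L ≃ₗ[ℤ] L | σ ∈ W ∧ IsReflectionE σ} with hSdef
  set lines : Set (ℚ ⊗[ℤ] L) :=
    ⋃ σ ∈ S, ⇑(TensorProduct.mk ℤ ℚ L 1) '' {x : L | σ x = -x} with hlinesdef
  set N : Submodule ℚ (ℚ ⊗[ℤ] L) := Submodule.span ℚ lines with hNdef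
  set ρ : (L ≃ₗ[ℤ] L) → (ℚ ⊗[ℤ] L →ₗ[ℚ] ℚ ⊗[ℤ] L) := fun w =>
    LinearMap.baseChange ℚ (w : L →ₗ[ℤ] L) with hρdef
  have ρ_tmul : ∀ (w : L ≃ₗ[ℤ] L) (x : L),
      ρ w ((1:ℚ) ⊗ₜ[ℤ] x) = (1:ℚ) ⊗ₜ[ℤ] (w x) := fun w x => rfl
  have ρ_mul : ∀ (g h : L ≃ₗ[ℤ] L) (v : ℚ ⊗[ℤ] L), ρ (g * h) v = ρ g (ρ h v) := by
    intro g h v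
    have hc : ((g * h : L ≃ₗ[ℤ] L) : L →ₗ[ℤ] L)
        = (g : L →ₗ[ℤ] L) ∘ₗ (h : L →ₗ[ℤ] L) := rfl
    simp only [hρdef, hc, LinearMap.baseChange_comp, LinearMap.comp_apply]
  have ρ_one : ∀ v : ℚ ⊗[ℤ] L, ρ 1 v = v := by
    intro v
    have hc : ((1 : L ≃ₗ[ℤ] L) : L →ₗ[ℤ] L) = LinearMap.id := rfl
    simp only [hρdef, hc, LinearMap.baseChange_id, LinearMap.id_apply]
  have line_mem : ∀ σ ∈ S, ∀ x : L, σ x = -x → (1:ℚ) ⊗ₜ[ℤ] x ∈ N := by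
    intro σ hσ x hx
    apply Submodule.subset_span
    rw [hlinesdef]
    simp only [Set.mem_iUnion]
    exact ⟨σ, hσ, x, hx, rfl⟩
  -- stability of N under W
  have hstab : ∀ w ∈ W, ∀ v ∈ N, ρ w v ∈ N := by
    intro w hw v hv
    have hmap : Submodule.map (ρ w) N ≤ N := by
      rw [hNdef, Submodule.map_span, Submodule.span_le]
      rintro _ ⟨u, hu, rfl⟩
      rw [hlinesdef] at hu
      simp only [Set.mem_iUnion] at hu
      obtain ⟨σ, hσ, x, hx, rfl⟩ := hu
      have hx' : σ x = -x := hx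
      have h1 : TensorProduct.mk ℤ ℚ L 1 x = (1:ℚ) ⊗ₜ[ℤ] x := rfl
      rw [h1, ρ_tmul]
      apply line_mem (w * σ * w⁻¹)
      · exact ⟨mul_mem (mul_mem hw hσ.1) (inv_mem hw), conj_reflection hσ.2⟩
      · have happ : (w * σ * w⁻¹ : L ≃ₗ[ℤ] L) (w x) = w (σ (w.symm (w x))) := rfl
        rw [happ, w.symm_apply_apply, hx', map_neg]
    exact hmap (Submodule.mem_map_of_mem hv)
  -- reflections move vectors along their lines
  have hrefl : ∀ σ ∈ S, ∀ v : ℚ ⊗[ℤ] L, v - ρ σ v ∈ N := by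
    intro σ hσ v
    set u : ℚ ⊗[ℤ] L := ρ σ v - v with hu
    have hσu : ρ σ u = -u := by
      rw [hu, map_sub, ← ρ_mul, hσ.2.1, ρ_one]
      abel
    obtain ⟨n, hn, x, hx⟩ := aux_exists_den u
    have hσx : σ x = -x := by
      apply aux_tmul_inj (L := L)
      have h1 : (1:ℚ) ⊗ₜ[ℤ] (σ x) = ρ σ ((1:ℚ) ⊗ₜ[ℤ] x) := (ρ_tmul σ x).symm
      rw [h1, ← hx, map_smul, hσu, smul_neg, hx, ← TensorProduct.tmul_neg]
    have hxN : (1:ℚ) ⊗ₜ[ℤ] x ∈ N := line_mem σ hσ x hσx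
    have huN : u ∈ N := by
      have hne : (n:ℚ) ≠ 0 := by exact_mod_cast hn.ne'
      have h2 : u = (n:ℚ)⁻¹ • ((n:ℚ) • u) := by
        rw [smul_smul, inv_mul_cancel₀ hne, one_smul]
      rw [h2, hx]
      exact N.smul_mem _ hxN
    have h3 : v - ρ σ v = -u := by rw [hu]; abel
    rw [h3]
    exact N.neg_mem huN
  -- all of W moves vectors into N
  have hWmove : ∀ w ∈ W, ∀ v : ℚ ⊗[ℤ] L, v - ρ w v ∈ N := by
    intro w hw
    rw [← hgen] at hw
    refine Subgroup.closure_induction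
      (p := fun g _ => ∀ v : ℚ ⊗[ℤ] L, v - ρ g v ∈ N) ?_ ?_ ?_ ?_ hw
    · intro σ hσ v; exact hrefl σ hσ v
    · intro v; rw [ρ_one, sub_self]; exact N.zero_mem
    · intro g h hg hh ihg ihh v
      have hgW : g ∈ W := by rw [← hgen]; exact hg
      have h4 : v - ρ (g * h) v = (v - ρ g v) + ρ g (v - ρ h v) := by
        rw [map_sub, ρ_mul]; abel
      rw [h4]
      exact N.add_mem (ihg v) (hstab g hgW _ (ihh v))
    · intro g hg ih v
      have hgW : g⁻¹ ∈ W := by rw [← hgen]; exact inv_mem hg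
      have h5 : v - ρ g⁻¹ v = -(ρ g⁻¹ (v - ρ g v)) := by
        rw [map_sub, ← ρ_mul, inv_mul_cancel, ρ_one, neg_sub]
      rw [h5]
      exact N.neg_mem (hstab g⁻¹ hgW _ (ih v))
  -- averaging
  rw [eq_top_iff]
  rintro v -
  set T : Finset (L ≃ₗ[ℤ] L) := hWfin.toFinset with hT
  have hmemT : ∀ w : L ≃ₗ[ℤ] L, w ∈ T ↔ w ∈ W := by
    intro w; rw [hT, Set.Finite.mem_toFinset]; rfl
  have h1T : (1 : L ≃ₗ[ℤ] L) ∈ T := (hmemT 1).mpr W.one_mem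
  have hcard : 0 < T.card := Finset.card_pos.mpr ⟨1, h1T⟩
  have hne : ((T.card : ℚ)) ≠ 0 := by
    exact_mod_cast hcard.ne'
  set vbar : ℚ ⊗[ℤ] L := (T.card : ℚ)⁻¹ • ∑ w ∈ T, ρ w v with hvbar
  have hfix : ∀ u ∈ W, ρ u vbar = vbar := by
    intro u hu
    rw [hvbar, map_smul, map_sum]
    congr 1
    have hsum : ∑ w ∈ T, ρ u (ρ w v) = ∑ w ∈ T, ρ (u * w) v := by
      apply Finset.sum_congr rfl
      intro w _
      rw [ρ_mul]
    rw [hsum]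
    refine Finset.sum_equiv (Equiv.mulLeft u) ?_ ?_
    · intro w
      simp only [hmemT, Equiv.coe_mulLeft]
      constructor
      · intro hw; exact mul_mem hu hw
      · intro hw
        have := mul_mem (inv_mem hu) hw
        simpa using this
    · intro w _
      rfl
  have hdiff : v - vbar ∈ N := by
    have hv : v = (T.card : ℚ)⁻¹ • ∑ _w ∈ T, v := by
      rw [Finset.sum_const, ← Nat.cast_smul_eq_nsmul ℚ, smul_smul,
        inv_mul_cancel₀ hne, one_smul]
    have h6 : v - vbar = (T.card : ℚ)⁻¹ • ∑ w ∈ T, (v - ρ w v) := by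
      rw [Finset.sum_sub_distrib, smul_sub, hvbar, ← hv]
    rw [h6]
    refine N.smul_mem _ (N.sum_mem ?_)
    intro w hw
    exact hWmove w ((hmemT w).mp hw) v
  have hsplit : v = vbar + (v - vbar) := by abel
  rw [hsplit]
  apply Submodule.add_mem
  · exact Submodule.subset_span (Or.inl hfix)
  · exact Submodule.span_mono Set.subset_union_right hdiff
end
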